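/- arXiv:math/9802116 — 13 statements merged into one kernel-verified Lean document; each statement's English description precedes it below -/
import Mathlib

section
/- Let k_F G be a twisted group algebra over a field of characteristic ≠ 2. The algebra k_F G is alternative (i.e. (a·a)·b = a·(a·b) and (a·b)·b = a·(b·b) for all a,b) if and only if for all x,y,z ∈ G: F(x,y)F(xy,z) + F(y,x)F(yx,z) = F(y,z)F(x,yz) + F(x,z)F(y,xz) and F(x,z)F(xz,y) + F(x,y)F(xy,z) = F(z,y)F(x,zy) + F(y,z)F(x,yz). -/
/-- The twisted product on the group algebra `kG`. -/
def tmul {G : Type*} [Group G] [Fintype G] {k : Type*} [Field k]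
    (F : G → G → k) (a b : G → k) : G → k :=
  fun z => ∑ x : G, F x (x⁻¹ * z) * a x * b (x⁻¹ * z)

section Aux

variable {G : Type*} [CommGroup G] [Fintype G] {k : Type*} [Field k]

/-- The basic "associator coefficient". -/
def t1 (F : G → G → k) (x y z : G) : k :=
  F x y * F (x * y) z - F y z * F x (y * z)

lemma expand_diff (F : G → G → k) (a b c : G → k) (w : G) :
    tmul F (tmul F a b) c w - tmul F a (tmul F b c) w
      = ∑ x : G, ∑ y : G,
          t1 F x y ((x * y)⁻¹ * w) * (a x * b y * c ((x * y)⁻¹ * w)) := by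
  have h1 : tmul F (tmul F a b) c w
      = ∑ x : G, ∑ y : G,
          (F x y * F (x * y) ((x * y)⁻¹ * w)) * (a x * b y * c ((x * y)⁻¹ * w)) := by
    simp only [tmul, Finset.sum_mul, Finset.mul_sum]
    rw [Finset.sum_comm]
    refine Finset.sum_congr rfl fun x _ => ?_
    rw [← Equiv.sum_comp (Equiv.mulLeft x)]
    refine Finset.sum_congr rfl fun y _ => ?_
    simp only [Equiv.coe_mulLeft]
    have h : x⁻¹ * (x * y) = y := by group
    rw [h]
    ring
  have h2 : tmul F a (tmul F b c) w
      = ∑ x : G, ∑ y : G,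
          (F y ((x * y)⁻¹ * w) * F x (y * ((x * y)⁻¹ * w)))
            * (a x * b y * c ((x * y)⁻¹ * w)) := by
    simp only [tmul, Finset.mul_sum]
    refine Finset.sum_congr rfl fun x _ => Finset.sum_congr rfl fun y _ => ?_
    have h : y⁻¹ * (x⁻¹ * w) = (x * y)⁻¹ * w := by group
    have h' : y * ((x * y)⁻¹ * w) = x⁻¹ * w := by
      rw [mul_inv_rev]; group
    rw [h, h']
    ring
  rw [h1, h2, ← Finset.sum_sub_distrib]
  refine Finset.sum_congr rfl fun x _ => ?_
  rw [← Finset.sum_sub_distrib]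
  refine Finset.sum_congr rfl fun y _ => ?_
  simp only [t1]; ring

lemma Scollapse [DecidableEq G] (F : G → G → k) (b : G → k) (w c d : G) :
    ∑ x : G, ∑ y : G,
        t1 F x y ((x * y)⁻¹ * w)
          * ((Pi.single c 1 : G → k) x * (Pi.single d 1 : G → k) y * b ((x * y)⁻¹ * w))
      = t1 F c d ((c * d)⁻¹ * w) * b ((c * d)⁻¹ * w) := by
  have this : ∀ x y : G,
      t1 F x y ((x * y)⁻¹ * w)
          * ((Pi.single c 1 : G → k) x * (Pi.single d 1 : G → k) y * b ((x * y)⁻¹ * w))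
        = (Pi.single c 1 : G → k) x * ((Pi.single d 1 : G → k) y
            * (t1 F x y ((x * y)⁻¹ * w) * b ((x * y)⁻¹ * w))) := by
    intro x y; ring
  simp only [this, Pi.single_apply, ite_mul, one_mul, zero_mul, mul_ite, mul_zero,
    Finset.sum_ite_eq', Finset.mem_univ, if_true]

lemma forward1 (F : G → G → k)
    (h : ∀ a b : G → k, tmul F (tmul F a a) b = tmul F a (tmul F a b)) :
    ∀ x y z : G, t1 F x y z + t1 F y x z = 0 := by
  classical
  intro x y z
  by_cases hxy : x = y
  · subst hxy
    have key := expand_diff F (Pi.single x 1) (Pi.single x 1) (Pi.single z (1:k)) (x * x * z)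
    rw [h, sub_self] at key
    rw [Scollapse] at key
    have hz : (x * x)⁻¹ * (x * x * z) = z := by group
    rw [hz, Pi.single_eq_same, mul_one] at key
    rw [← key]; ring
  · set a : G → k := Pi.single x 1 + Pi.single y 1 with ha
    have key := expand_diff F a a (Pi.single z (1:k)) (x * y * z)
    rw [h, sub_self] at key
    have split : ∀ p q : G,
        t1 F p q ((p * q)⁻¹ * (x * y * z))
            * (a p * a q * (Pi.single z 1 : G → k) ((p * q)⁻¹ * (x * y * z)))
          = t1 F p q ((p * q)⁻¹ * (x * y * z))
              * ((Pi.single x 1 : G → k) p * (Pi.single x 1 : G → k) q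
                  * (Pi.single z 1 : G → k) ((p * q)⁻¹ * (x * y * z)))
            + t1 F p q ((p * q)⁻¹ * (x * y * z))
              * ((Pi.single x 1 : G → k) p * (Pi.single y 1 : G → k) q
                  * (Pi.single z 1 : G → k) ((p * q)⁻¹ * (x * y * z)))
            + t1 F p q ((p * q)⁻¹ * (x * y * z))
              * ((Pi.single y 1 : G → k) p * (Pi.single x 1 : G → k) q
                  * (Pi.single z 1 : G → k) ((p * q)⁻¹ * (x * y * z)))
            + t1 F p q ((p * q)⁻¹ * (x * y * z))
              * ((Pi.single y 1 : G → k) p * (Pi.single y 1 : G → k) q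
                  * (Pi.single z 1 : G → k) ((p * q)⁻¹ * (x * y * z))) := by
      intro p q
      simp only [ha, Pi.add_apply]
      ring
    simp only [split, Finset.sum_add_distrib] at key
    rw [Scollapse, Scollapse, Scollapse, Scollapse] at key
    have e1 : (x * x)⁻¹ * (x * y * z) ≠ z := by
      intro hc
      apply hxy
      have : (x * x : G) = x * y := by
        have := mul_left_cancel (a := (x*x)⁻¹) (b := x*y*z) (c := (x*x)*z) ?_
        · exact mul_right_cancel this.symm
        · rw [hc]; group
      exact mul_left_cancel this
    have e2 : (y * y)⁻¹ * (x * y * z) ≠ z := by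
      intro hc
      apply hxy
      have : (y * y : G) = x * y := by
        have := mul_left_cancel (a := (y*y)⁻¹) (b := x*y*z) (c := (y*y)*z) ?_
        · exact mul_right_cancel this.symm
        · rw [hc]; group
      exact (mul_right_cancel this).symm
    have e3 : (x * y)⁻¹ * (x * y * z) = z := by group
    have e4 : (y * x)⁻¹ * (x * y * z) = z := by
      rw [mul_comm y x]; group
    rw [Pi.single_eq_of_ne e1, Pi.single_eq_of_ne e2, e3, e4, Pi.single_eq_same,
      mul_zero, mul_zero, mul_one, mul_one, zero_add, add_zero] at key
    linear_combination -key

lemma forward2 (F : G → G → k)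
    (h : ∀ a b : G → k, tmul F (tmul F a b) b = tmul F a (tmul F b b)) :
    ∀ x y z : G, t1 F x z y + t1 F x y z = 0 := by
  classical
  intro x y z
  by_cases hyz : y = z
  · subst hyz
    have key := expand_diff F (Pi.single x (1:k)) (Pi.single y 1) (Pi.single y 1) (x * y * y)
    rw [h, sub_self] at key
    rw [Scollapse] at key
    have hz : (x * y)⁻¹ * (x * y * y) = y := by group
    rw [hz, Pi.single_eq_same, mul_one] at key
    rw [← key]; ring
  · set b : G → k := Pi.single y 1 + Pi.single z 1 with hb
    have key := expand_diff F (Pi.single x (1:k)) b b (x * y * z)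
    rw [h, sub_self] at key
    have split : ∀ p q : G,
        t1 F p q ((p * q)⁻¹ * (x * y * z))
            * ((Pi.single x 1 : G → k) p * b q * b ((p * q)⁻¹ * (x * y * z)))
          = t1 F p q ((p * q)⁻¹ * (x * y * z))
              * ((Pi.single x 1 : G → k) p * (Pi.single y 1 : G → k) q
                  * b ((p * q)⁻¹ * (x * y * z)))
            + t1 F p q ((p * q)⁻¹ * (x * y * z))
              * ((Pi.single x 1 : G → k) p * (Pi.single z 1 : G → k) q
                  * b ((p * q)⁻¹ * (x * y * z))) := by
      intro p q
      simp only [hb, Pi.add_apply]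
      ring
    simp only [split, Finset.sum_add_distrib] at key
    rw [Scollapse, Scollapse] at key
    have e3 : (x * y)⁻¹ * (x * y * z) = z := by group
    have e4 : (x * z)⁻¹ * (x * y * z) = y := by
      simp [mul_inv_rev, mul_comm, mul_left_comm, mul_assoc]
    rw [e3, e4] at key
    have bz : b z = 1 := by
      simp only [hb, Pi.add_apply, Pi.single_eq_same, Pi.single_apply]
      rw [if_neg (fun hc => hyz hc.symm)]; ring
    have by' : b y = 1 := by
      simp only [hb, Pi.add_apply, Pi.single_eq_same, Pi.single_apply]
      rw [if_neg hyz]; ring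
    rw [bz, by', mul_one, mul_one] at key
    linear_combination -key

lemma back1 (F : G → G → k) (h2 : (2:k) ≠ 0)
    (H : ∀ x y z : G, t1 F x y z + t1 F y x z = 0) (a b : G → k) :
    tmul F (tmul F a a) b = tmul F a (tmul F a b) := by
  funext w
  rw [← sub_eq_zero, expand_diff]
  set S := ∑ x : G, ∑ y : G,
      t1 F x y ((x * y)⁻¹ * w) * (a x * a y * b ((x * y)⁻¹ * w)) with hS
  have hswap : S = ∑ x : G, ∑ y : G,
      t1 F y x ((x * y)⁻¹ * w) * (a x * a y * b ((x * y)⁻¹ * w)) := by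
    rw [hS, Finset.sum_comm]
    refine Finset.sum_congr rfl fun x _ => Finset.sum_congr rfl fun y _ => ?_
    rw [mul_comm y x]
    ring
  have key : S + S = 0 := by
    nth_rewrite 2 [hswap]
    rw [← Finset.sum_add_distrib]
    refine Finset.sum_eq_zero fun x _ => ?_
    rw [← Finset.sum_add_distrib]
    refine Finset.sum_eq_zero fun y _ => ?_
    have : t1 F x y ((x * y)⁻¹ * w) * (a x * a y * b ((x * y)⁻¹ * w))
        + t1 F y x ((x * y)⁻¹ * w) * (a x * a y * b ((x * y)⁻¹ * w))
        = (t1 F x y ((x * y)⁻¹ * w) + t1 F y x ((x * y)⁻¹ * w))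
            * (a x * a y * b ((x * y)⁻¹ * w)) := by ring
    rw [this, H, zero_mul]
  have h2S : (2:k) * S = 0 := by rw [two_mul]; exact key
  exact (mul_eq_zero.mp h2S).resolve_left h2

lemma back2 (F : G → G → k) (h2 : (2:k) ≠ 0)
    (H : ∀ x y z : G, t1 F x z y + t1 F x y z = 0) (a b : G → k) :
    tmul F (tmul F a b) b = tmul F a (tmul F b b) := by
  funext w
  rw [← sub_eq_zero, expand_diff]
  set S := ∑ x : G, ∑ y : G,
      t1 F x y ((x * y)⁻¹ * w) * (a x * b y * b ((x * y)⁻¹ * w)) with hS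
  have hswap : S = ∑ x : G, ∑ y : G,
      t1 F x ((x * y)⁻¹ * w) y * (a x * b y * b ((x * y)⁻¹ * w)) := by
    rw [hS]
    refine Finset.sum_congr rfl fun x _ => ?_
    set e : G ≃ G := (Equiv.inv G).trans (Equiv.mulLeft (x⁻¹ * w)) with he
    rw [← Equiv.sum_comp e
      (fun y => t1 F x y ((x * y)⁻¹ * w) * (a x * b y * b ((x * y)⁻¹ * w)))]
    refine Finset.sum_congr rfl fun y _ => ?_
    have he1 : e y = (x * y)⁻¹ * w := by
      simp only [he, Equiv.trans_apply, Equiv.inv_apply, Equiv.coe_mulLeft]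
      rw [mul_inv_rev]
      simp [mul_comm, mul_left_comm, mul_assoc]
    have he2 : (x * ((x * y)⁻¹ * w))⁻¹ * w = y := by
      simp [mul_inv_rev, mul_comm, mul_left_comm, mul_assoc]
    rw [he1, he2]
    ring
  have key : S + S = 0 := by
    nth_rewrite 2 [hswap]
    rw [← Finset.sum_add_distrib]
    refine Finset.sum_eq_zero fun x _ => ?_
    rw [← Finset.sum_add_distrib]
    refine Finset.sum_eq_zero fun y _ => ?_
    have : t1 F x y ((x * y)⁻¹ * w) * (a x * b y * b ((x * y)⁻¹ * w))
        + t1 F x ((x * y)⁻¹ * w) y * (a x * b y * b ((x * y)⁻¹ * w))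
        = (t1 F x ((x * y)⁻¹ * w) y + t1 F x y ((x * y)⁻¹ * w))
            * (a x * b y * b ((x * y)⁻¹ * w)) := by ring
    rw [this, H, zero_mul]
  have h2S : (2:k) * S = 0 := by rw [two_mul]; exact key
  exact (mul_eq_zero.mp h2S).resolve_left h2

end Aux

/-- `k_F G` is alternative iff `F` satisfies the two stated identities. -/
theorem stmt4 {G : Type*} [CommGroup G] [Fintype G] {k : Type*} [Field k]
    (h2 : (2 : k) ≠ 0)
    (F : G → G → k) (hne : ∀ x y, F x y ≠ 0)
    (hr : ∀ x, F x 1 = 1) (hl : ∀ x, F 1 x = 1) :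
    (∀ a b : G → k,
      tmul F (tmul F a a) b = tmul F a (tmul F a b) ∧
      tmul F (tmul F a b) b = tmul F a (tmul F b b))
    ↔ (∀ x y z : G,
        F x y * F (x * y) z + F y x * F (y * x) z
          = F y z * F x (y * z) + F x z * F y (x * z) ∧
        F x z * F (x * z) y + F x y * F (x * y) z
          = F z y * F x (z * y) + F y z * F x (y * z)) := by
  constructor
  · intro h x y z
    have H1 := forward1 F (fun a b => (h a b).1) x y z
    have H2 := forward2 F (fun a b => (h a b).2) x y z
    simp only [t1] at H1 H2
    exact ⟨by linear_combination H1, by linear_combination H2⟩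
  · intro H a b
    have H1 : ∀ x y z : G, t1 F x y z + t1 F y x z = 0 := by
      intro x y z
      have := (H x y z).1
      simp only [t1]
      linear_combination this
    have H2 : ∀ x y z : G, t1 F x z y + t1 F x y z = 0 := by
      intro x y z
      have := (H x y z).2
      simp only [t1]
      linear_combination this
    exact ⟨back1 F h2 H1 a b, back2 F h2 H2 a b⟩
end

section
/- If the twisted group algebra k_F G (char k ≠ 2) is alternative, then its associator cocycle φ = ∂F satisfies φ(x,x,y) = φ(x,y,y) = φ(x,y,x) = 1 for all x,y ∈ G. -/
/-- The coboundary 3-cocycle of a 2-cochain `F`. -/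
def cob {G : Type*} [Group G] {k : Type*} [Field k] (F : G → G → k) (x y z : G) : k :=
  F x y * F (x * y) z / (F y z * F x (y * z))

lemma tmul_single {G : Type*} [Group G] [Fintype G] [DecidableEq G] {k : Type*} [Field k]
    (F : G → G → k) (u v : G) (c d : k) :
    tmul F (Pi.single u c) (Pi.single v d) = Pi.single (u * v) (F u v * c * d) := by
  funext z
  simp only [tmul, Pi.single_apply]
  rw [Finset.sum_eq_single u]
  · by_cases h : z = u * v
    · have : u⁻¹ * z = v := by rw [h]; group
      simp [h, this]
    · have : u⁻¹ * z ≠ v := fun hh => h (by rw [← hh]; group)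
      simp [h, this]
  · intro x _ hx; simp [hx]
  · simp

lemma tmul_add_left {G : Type*} [Group G] [Fintype G] {k : Type*} [Field k]
    (F : G → G → k) (a a' b : G → k) :
    tmul F (a + a') b = tmul F a b + tmul F a' b := by
  funext z
  simp [tmul, add_mul, mul_add, Finset.sum_add_distrib]

lemma tmul_add_right {G : Type*} [Group G] [Fintype G] {k : Type*} [Field k]
    (F : G → G → k) (a b b' : G → k) :
    tmul F a (b + b') = tmul F a b + tmul F a b' := by
  funext z
  simp [tmul, add_mul, mul_add, Finset.sum_add_distrib]


/-- if `k_F G` is alternative then `φ(x,x,y) = φ(x,y,y) = φ(x,y,x) = 1`. -/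
theorem stmt5 {G : Type*} [CommGroup G] [Fintype G] {k : Type*} [Field k]
    (h2 : (2 : k) ≠ 0)
    (F : G → G → k) (hne : ∀ x y, F x y ≠ 0)
    (hr : ∀ x, F x 1 = 1) (hl : ∀ x, F 1 x = 1)
    (halt : ∀ a b : G → k,
      tmul F (tmul F a a) b = tmul F a (tmul F a b) ∧
      tmul F (tmul F a b) b = tmul F a (tmul F b b)) :
    ∀ x y : G, cob F x x y = 1 ∧ cob F x y y = 1 ∧ cob F x y x = 1 := by
  classical
  -- key1 : left alternative on basis elements
  have key1 : ∀ x y : G, F x x * F (x * x) y = F x y * F x (x * y) := by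
    intro x y
    have h := (halt (Pi.single x 1) (Pi.single y 1)).1
    rw [tmul_single, tmul_single, tmul_single, tmul_single] at h
    have h' := congrFun h (x * x * y)
    simp [Pi.single_apply, mul_assoc] at h'
    linear_combination h'
  have key2 : ∀ x y : G, F x y * F (x * y) y = F y y * F x (y * y) := by
    intro x y
    have h := (halt (Pi.single x 1) (Pi.single y 1)).2
    rw [tmul_single, tmul_single, tmul_single, tmul_single] at h
    have h' := congrFun h (x * y * y)
    simp [Pi.single_apply, mul_assoc] at h'
    linear_combination h'
  have key3 : ∀ x y : G, F x y * F (x * y) x = F y x * F x (y * x) := by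
    intro x y
    by_cases hxy : x = y
    · subst hxy; linear_combination key1 x x
    · have h := (halt (Pi.single x 1 + Pi.single y 1) (Pi.single x 1)).1
      simp only [tmul_add_left, tmul_add_right, tmul_single] at h
      have h' := congrFun h (x * y * x)
      have e1 : x * y * x ≠ x * x * x := by
        intro hh; exact hxy (mul_left_cancel (mul_right_cancel hh)).symm
      have e2 : x * y * x = x * (y * x) := by group
      have e3 : x * y * x = y * x * x := by
        rw [mul_comm x y]
      have e4 : x * y * x ≠ y * y * x := by
        intro hh
        have h9 := mul_right_cancel hh
        rw [mul_comm x y] at h9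
        exact hxy (mul_left_cancel h9)
      have e5 : x * y * x ≠ x * (x * x) := by
        intro hh; exact e1 (by rw [hh]; group)
      have e6 : x * y * x = y * (x * x) := by rw [mul_comm x y]; group
      have e7 : x * y * x ≠ y * (y * x) := by
        intro hh; exact e4 (by rw [hh]; group)
      have c1 : (x * y * x = x * x * x) = False := eq_false e1
      have c2 : (x * y * x = y * x * x) = True := eq_true e3
      have c3 : (x * y * x = x * y * x) = True := eq_true rfl
      have c4 : (x * y * x = y * y * x) = False := eq_false e4
      have c5 : (x * y * x = x * (x * x)) = False := eq_false e5
      have c6 : (x * y * x = y * (x * x)) = True := eq_true e6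
      have c7 : (x * y * x = x * (y * x)) = True := eq_true e2
      have c8 : (x * y * x = y * (y * x)) = False := eq_false e7
      simp only [Pi.add_apply, Pi.single_apply, mul_one, one_mul, c1, c2, c3, c4, c5, c6,
        c7, c8, if_true, if_false, zero_add, add_zero] at h'
      have k2 := key2 y x
      have e8 : x * x = x * x := rfl
      -- h' : F (x*y) x * F x y + F (y*x) x * F y x = F x (y*x) * F y x + F y (x*x) * F x x
      -- k2 : F y x * F (y*x) x = F x x * F y (x*x)
      linear_combination h' - k2
  intro x y
  refine ⟨?_, ?_, ?_⟩
  · rw [cob, div_eq_one_iff_eq (mul_ne_zero (hne _ _) (hne _ _))]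
    linear_combination key1 x y
  · rw [cob, div_eq_one_iff_eq (mul_ne_zero (hne _ _) (hne _ _))]
    linear_combination key2 x y
  · rw [cob, div_eq_one_iff_eq (mul_ne_zero (hne _ _) (hne _ _))]
    linear_combination key3 x y
end

section
/- Let k_F G be a twisted group algebra and σ the linear map σ(x) = s(x)x for a function s: G → k. Then σ is an algebra involution (σ² = id, σ(1) = 1, σ(a·b) = σ(b)·σ(a)) if and only if s(e) = 1, s(x)² = 1 for all x, and s(x)s(y)/s(xy) = F(x,y)/F(y,x) for all x,y ∈ G. -/
def delta {G : Type*} [DecidableEq G] {k : Type*} [Zero k] [One k] (x : G) : G → k :=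
  fun y => if y = x then 1 else 0

/-- The diagonal linear map `σ(x) = s(x) x` extended linearly. -/
def sigmaMap {G : Type*} {k : Type*} [Mul k] (s : G → k) (a : G → k) : G → k :=
  fun x => s x * a x

/-- `σ(x) = s(x)x` is an algebra involution of `k_F G` iff
`s(e)=1`, `s² = 1` and `s(x)s(y)/s(xy) = F(x,y)/F(y,x)`. -/
theorem stmt6 {G : Type*} [CommGroup G] [Fintype G] [DecidableEq G] {k : Type*} [Field k]
    (F : G → G → k) (hne : ∀ x y, F x y ≠ 0)
    (hr : ∀ x, F x 1 = 1) (hl : ∀ x, F 1 x = 1)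
    (s : G → k) (hs : ∀ x, s x ≠ 0) :
    ((∀ a : G → k, sigmaMap s (sigmaMap s a) = a) ∧
     sigmaMap s (delta 1) = (delta 1 : G → k) ∧
     (∀ a b : G → k, sigmaMap s (tmul F a b) = tmul F (sigmaMap s b) (sigmaMap s a)))
    ↔ (s 1 = 1 ∧ (∀ x : G, s x ^ 2 = 1) ∧
       ∀ x y : G, s x * s y / s (x * y) = F x y / F y x) := by
  have tdelta : ∀ (x y : G), tmul F (delta x) (delta y) (x * y) = F x y := by
    intro x y
    unfold tmul
    rw [Finset.sum_eq_single x]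
    · simp [delta]
    · intro w _ hw
      simp [delta, hw]
    · simp
  constructor
  · rintro ⟨h2, h1, h3⟩
    have hone : s 1 = 1 := by
      have := congrFun h1 1
      simpa [sigmaMap, delta] using this
    refine ⟨hone, ?_, ?_⟩
    · intro x
      have := congrFun (h2 (delta x)) x
      simp [sigmaMap, delta] at this
      rw [sq]; exact this
    · intro x y
      have h := congrFun (h3 (delta x) (delta y)) (x * y)
      have hL : sigmaMap s (tmul F (delta x) (delta y)) (x * y)
          = s (x * y) * F x y := by
        simp [sigmaMap, tdelta]
      have hR : tmul F (sigmaMap s (delta y)) (sigmaMap s (delta x)) (x * y)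
          = s y * s x * F y x := by
        have e1 : sigmaMap s (delta y) = fun w => s y * delta y w := by
          funext w; by_cases hw : w = y <;> simp [sigmaMap, delta, hw]
        have e2 : sigmaMap s (delta x) = fun w => s x * delta x w := by
          funext w; by_cases hw : w = x <;> simp [sigmaMap, delta, hw]
        rw [e1, e2]
        unfold tmul
        rw [Finset.sum_eq_single y]
        · have : y⁻¹ * (x * y) = x := by rw [mul_comm x y, inv_mul_cancel_left]
          simp [this, delta]; ring
        · intro w _ hw
          simp [delta, hw]
        · simp
      rw [hL, hR] at h
      rw [div_eq_div_iff (hs (x * y)) (hne y x)]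
      linear_combination -h
  · rintro ⟨hone, hsq, hF⟩
    have key : ∀ x y : G, s x * s y * F y x = F x y * s (x * y) := by
      intro x y
      exact (div_eq_div_iff (hs (x * y)) (hne y x)).mp (hF x y)
    refine ⟨?_, ?_, ?_⟩
    · intro a; funext x
      have := hsq x
      rw [sq] at this
      simp only [sigmaMap, ← mul_assoc, this, one_mul]
    · funext x
      by_cases hx : x = 1 <;> simp [sigmaMap, delta, hx, hone]
    · intro a b
      funext z
      unfold sigmaMap tmul
      rw [Finset.mul_sum]
      refine Fintype.sum_equiv ((Equiv.inv G).trans (Equiv.mulRight z)) _ _ ?_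
      intro x
      simp only [Equiv.trans_apply, Equiv.inv_apply, Equiv.coe_mulRight]
      have e1 : (x⁻¹ * z)⁻¹ * z = x := by
        rw [mul_inv_rev, inv_inv, mul_comm z⁻¹ x, mul_assoc, inv_mul_cancel, mul_one]
      rw [e1]
      have hk := key x (x⁻¹ * z)
      have e2 : x * (x⁻¹ * z) = z := by group
      rw [e2] at hk
      calc s z * (F x (x⁻¹ * z) * a x * b (x⁻¹ * z))
          = (F x (x⁻¹ * z) * s z) * (a x * b (x⁻¹ * z)) := by ring
        _ = (s x * s (x⁻¹ * z) * F (x⁻¹ * z) x) * (a x * b (x⁻¹ * z)) := by rw [← hk]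
        _ = F (x⁻¹ * z) x * (s (x⁻¹ * z) * b (x⁻¹ * z)) * (s x * a x) := by ring
end

section
/- Let k_F G be a twisted group algebra over a field k with char k ≠ 2, such that σ(x) = F(x,x)x defines a strong involution, and suppose |G| ≠ 2 in k. Then k_F G is a simple algebra (its only two-sided ideals are 0 and k_F G). -/
/-- `σ` is a strong involution of `k_F G`. -/
def IsStrongInvolution {G : Type*} [Group G] [Fintype G] [DecidableEq G] {k : Type*} [Field k]
    (F : G → G → k) (s : G → k) : Prop :=
  (∀ a : G → k, sigmaMap s (sigmaMap s a) = a) ∧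
  sigmaMap s (delta 1) = (delta 1 : G → k) ∧
  (∀ a b : G → k, sigmaMap s (tmul F a b) = tmul F (sigmaMap s b) (sigmaMap s a)) ∧
  (∀ a : G → k, ∃ c : k, a + sigmaMap s a = c • (delta 1 : G → k)) ∧
  (∀ a : G → k, ∃ c : k, tmul F a (sigmaMap s a) = c • (delta 1 : G → k))

section helpers
variable {G : Type*} [CommGroup G] [Fintype G] [DecidableEq G] {k : Type*} [Field k]

lemma tmul_delta_left (F : G → G → k) (a : G → k) (g z : G) :
    tmul F (delta g) a z = F g (g⁻¹ * z) * a (g⁻¹ * z) := by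
  unfold tmul delta
  rw [Finset.sum_eq_single g]
  · simp
  · intro b _ hb; simp [hb]
  · simp

lemma tmul_delta_right (F : G → G → k) (a : G → k) (g z : G) :
    tmul F a (delta g) z = F (z * g⁻¹) g * a (z * g⁻¹) := by
  unfold tmul delta
  rw [Finset.sum_eq_single (z * g⁻¹)]
  · have h : (z * g⁻¹)⁻¹ * z = g := by group
    rw [h]; simp
  · intro b _ hb
    have : b⁻¹ * z ≠ g := by
      intro h; apply hb; rw [← h]; group
    simp [this]
  · simp

end helpers

/-- if `σ(x) = F(x,x)x` is a strong involution and `|G| ≠ 2` in `k`,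
then `k_F G` is simple. -/
theorem stmt8 {G : Type*} [CommGroup G] [Fintype G] [DecidableEq G] {k : Type*} [Field k]
    (h2 : (2 : k) ≠ 0)
    (F : G → G → k) (hne : ∀ x y, F x y ≠ 0)
    (hr : ∀ x, F x 1 = 1) (hl : ∀ x, F 1 x = 1)
    (hstrong : IsStrongInvolution F (fun x => F x x))
    (hcard : (Fintype.card G : k) ≠ 2) :
    ∀ I : Submodule k (G → k),
      (∀ a ∈ I, ∀ b : G → k, tmul F a b ∈ I ∧ tmul F b a ∈ I) →
      I = ⊥ ∨ I = ⊤ := by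
  obtain ⟨hinv2, hid, hanti, hprop4, hprop5⟩ := hstrong
  -- F x x = -1 for x ≠ 1
  have hFneg : ∀ x : G, x ≠ 1 → F x x = -1 := by
    intro x hx
    obtain ⟨c, hc⟩ := hprop4 (delta x)
    have h := congrFun hc x
    simp only [Pi.add_apply, sigmaMap, delta, Pi.smul_apply, smul_eq_mul] at h
    simp only [if_true, eq_self_iff_true, if_neg hx, mul_one, mul_zero] at h
    linear_combination h
  -- every element squares to 1
  have hsq : ∀ x : G, x * x = 1 := by
    intro x
    by_cases hx : x = 1
    · simp [hx]
    by_contra hxx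
    obtain ⟨c, hc⟩ := hprop5 (delta x)
    have h := congrFun hc (x * x)
    rw [tmul_delta_left] at h
    simp only [sigmaMap, inv_mul_cancel_left, delta, if_pos rfl, Pi.smul_apply,
      smul_eq_mul, if_neg hxx, mul_one, mul_zero] at h
    rw [hFneg x hx] at h
    norm_num at h
  have hinv : ∀ x : G, x⁻¹ = x := fun x => inv_eq_of_mul_eq_one_right (hsq x)
  have hFsq : ∀ x : G, F x x * F x x = 1 := by
    intro x
    by_cases hx : x = 1
    · rw [hx, hr 1]; ring
    · rw [hFneg x hx]; ring
  -- anticommutation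
  have hac : ∀ x y : G, x ≠ 1 → y ≠ 1 → x ≠ y → F x y + F y x = 0 := by
    intro x y hx hy hxy
    have hxy1 : x * y ≠ 1 := by
      intro h
      exact hxy (by rw [← hinv y]; exact eq_inv_of_mul_eq_one_left h)
    have h := congrFun (hanti (delta x) (delta y)) (x * y)
    -- LHS
    have hL : sigmaMap (fun x => F x x) (tmul F (delta x) (delta y)) (x * y)
        = -(F x y) := by
      simp only [sigmaMap]
      rw [tmul_delta_left, inv_mul_cancel_left]
      unfold delta
      rw [if_pos rfl, mul_one, hFneg _ hxy1]; ring
    have hR : tmul F (sigmaMap (fun x => F x x) (delta y))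
        (sigmaMap (fun x => F x x) (delta x)) (x * y) = F y x := by
      unfold tmul sigmaMap delta
      rw [Finset.sum_eq_single y]
      · have h1 : y⁻¹ * (x * y) = x := by
          rw [mul_comm x y, inv_mul_cancel_left]
        rw [h1, if_pos rfl, if_pos rfl]
        show F y x * (F y y * 1) * (F x x * 1) = F y x
        rw [hFneg x hx, hFneg y hy]
        ring
      · intro b _ hb; simp [hb]
      · simp
    rw [hL, hR] at h
    linear_combination -h
  intro I hI
  by_cases hbot : I = ⊥
  · exact Or.inl hbot
  right
  -- the norm of any element of I, times δ₁, lies in I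
  have hsum : ∀ b ∈ I, (∑ x : G, b x * b x) • (delta 1 : G → k) ∈ I := by
    intro b hb
    obtain ⟨c, hc⟩ := hprop5 b
    have h1 := congrFun hc 1
    have hval : tmul F b (sigmaMap (fun x => F x x) b) 1 = ∑ x : G, b x * b x := by
      unfold tmul sigmaMap
      refine Finset.sum_congr rfl fun x _ => ?_
      rw [mul_one, hinv x]
      have := hFsq x
      ring_nf
      linear_combination (b x * b x) * hFsq x
    rw [hval] at h1
    unfold delta at h1
    rw [Pi.smul_apply, smul_eq_mul, if_pos rfl, mul_one] at h1
    rw [h1, ← hc]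
    exact (hI b hb _).1
  by_cases hd : (delta 1 : G → k) ∈ I
  · -- I = ⊤
    rw [eq_top_iff]
    intro b _
    have hb : tmul F (delta 1) b = b := by
      funext z
      rw [tmul_delta_left]
      simp [hl]
    exact hb ▸ (hI _ hd b).1
  exfalso
  -- if δ₁ ∉ I then every element of I has zero norm
  have hN : ∀ b ∈ I, ∑ x : G, b x * b x = 0 := by
    intro b hb
    by_contra h
    apply hd
    have := I.smul_mem (∑ x : G, b x * b x)⁻¹ (hsum b hb)
    rwa [smul_smul, inv_mul_cancel₀ h, one_smul] at this
  -- pick a nonzero element of I, and normalize so that its value at 1 is nonzero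
  obtain ⟨a, haI, hane⟩ := Submodule.exists_mem_ne_zero_of_ne_bot hbot
  obtain ⟨g, hg⟩ : ∃ g : G, a g ≠ 0 := by
    by_contra h
    push_neg at h
    exact hane (funext fun x => h x)
  set a' : G → k := tmul F a (delta g) with ha'
  have ha'I : a' ∈ I := (hI a haI (delta g)).1
  have ha'1 : a' 1 ≠ 0 := by
    rw [ha', tmul_delta_right, one_mul, hinv g]
    exact mul_ne_zero (hne g g) hg
  -- key: a' w * a' w = -(a' 1 * a' 1) for all w ≠ 1
  have key : ∀ w : G, w ≠ 1 → a' w * a' w = -(a' 1 * a' 1) := by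
    intro w hw
    set e : G → k := tmul F (delta w) a' + tmul F a' (delta w) with he0
    have heI : e ∈ I := I.add_mem (hI a' ha'I (delta w)).2 (hI a' ha'I (delta w)).1
    have he : e = (2 * a' 1) • (delta w : G → k) - (2 * a' w) • (delta 1 : G → k) := by
      funext z
      simp only [he0, Pi.add_apply, Pi.sub_apply, Pi.smul_apply, smul_eq_mul]
      rw [tmul_delta_left, tmul_delta_right, hinv w, mul_comm z w]
      unfold delta
      by_cases hz1 : z = w
      · rw [hz1, hsq w, if_pos rfl, if_neg hw, hr, hl, mul_one, mul_zero]
        ring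
      · by_cases hz2 : z = 1
        · rw [hz2, mul_one, if_neg (Ne.symm hw), if_pos rfl, hFneg w hw]
          ring
        · have hw1 : w * z ≠ 1 := by
            intro h
            exact hz1 (by rw [← hinv w]; exact eq_inv_of_mul_eq_one_right h)
          have hww : w ≠ w * z := by
            intro h
            exact hz2 ((left_eq_mul.mp h))
          have h := hac w (w * z) hw hw1 hww
          rw [if_neg hz1, if_neg hz2, mul_zero, mul_zero, sub_zero]
          linear_combination a' (w * z) * h
    have hNe := hN e heI
    have hsum2 : ∑ x : G, e x * e x = e 1 * e 1 + e w * e w := by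
      rw [← Finset.sum_subset (Finset.subset_univ ({1, w} : Finset G))]
      · rw [Finset.sum_pair (Ne.symm hw)]
      · intro x _ hx
        simp only [Finset.mem_insert, Finset.mem_singleton, not_or] at hx
        rw [he]
        simp [delta, hx.1, hx.2]
    have he1 : e 1 = -(2 * a' w) := by
      rw [he]
      unfold delta
      rw [Pi.sub_apply, Pi.smul_apply, Pi.smul_apply, smul_eq_mul, smul_eq_mul,
        if_neg (Ne.symm hw), if_pos rfl, mul_zero, mul_one]
      ring
    have hew : e w = 2 * a' 1 := by
      rw [he]
      unfold delta
      rw [Pi.sub_apply, Pi.smul_apply, Pi.smul_apply, smul_eq_mul, smul_eq_mul,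
        if_pos rfl, if_neg hw, mul_zero, mul_one]
      ring
    rw [hsum2, he1, hew] at hNe
    have h4 : (4 : k) ≠ 0 := by
      have h42 : (4 : k) = 2 * 2 := by norm_num
      rw [h42]
      exact mul_ne_zero h2 h2
    have : (4 : k) * (a' w * a' w + a' 1 * a' 1) = 0 := by linear_combination hNe
    have h5 := (mul_eq_zero.mp this).resolve_left h4
    linear_combination h5
  -- now sum the norm of a'
  have h0 := hN a' ha'I
  rw [← Finset.add_sum_erase _ _ (Finset.mem_univ 1)] at h0
  have hrest : ∑ x ∈ Finset.univ.erase (1 : G), a' x * a' x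
      = ∑ _x ∈ Finset.univ.erase (1 : G), -(a' 1 * a' 1) :=
    Finset.sum_congr rfl fun x hx => key x (Finset.ne_of_mem_erase hx)
  rw [hrest, Finset.sum_const, Finset.card_erase_of_mem (Finset.mem_univ 1),
    Finset.card_univ, nsmul_eq_mul] at h0
  have hpos : 1 ≤ Fintype.card G := Fintype.card_pos
  rw [Nat.cast_sub hpos, Nat.cast_one] at h0
  apply hcard
  have hA : a' 1 * a' 1 ≠ 0 := mul_ne_zero ha'1 ha'1
  have : ((Fintype.card G : k) - 2) * (a' 1 * a' 1) = 0 := by linear_combination -h0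
  have := (mul_eq_zero.mp this).resolve_right hA
  linear_combination this
end

section
/- Let G ≅ (Z₂)ⁿ and k a field of characteristic ≠ 2. The Euclidean norm q (orthonormal on the basis G) makes k_F G a composition algebra, i.e. q(a·b) = q(a)q(b) for all a,b, if and only if (i) F(x,y)² = 1 for all x,y ∈ G, and (ii) F(x,xz)F(y,yz) + F(x,yz)F(y,xz) = 0 for all x,y,z ∈ G with x ≠ y. -/
/-- The Euclidean norm quadratic form making the basis `G` orthonormal. -/
def qE {G : Type*} [Fintype G] {k : Type*} [Field k] (a : G → k) : k :=
  ∑ x : G, (a x) ^ 2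

section aux
variable {G : Type*} [CommGroup G] [Fintype G] [DecidableEq G] {k : Type*} [Field k]

lemma aux_sum_sq_two {z z' : G} (h : z ≠ z') (p q : k) :
    ∑ w : G, (if w = z then p else if w = z' then q else 0) ^ 2 = p ^ 2 + q ^ 2 := by
  have key : ∀ w : G, (if w = z then p else if w = z' then q else 0) ^ 2
      = (if w = z then p ^ 2 else 0) + (if w = z' then q ^ 2 else 0) := by
    intro w
    rcases eq_or_ne w z with rfl | hw
    · simp [h]
    · simp [hw]
  simp [key, Finset.sum_add_distrib]

lemma aux_tmul_single (hG : ∀ x : G, x * x = 1) (F : G → G → k) (x : G) (b : G → k) (w : G) :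
    tmul F (Pi.single x (1:k)) b w = F x (x * w) * b (x * w) := by
  have hinv : ∀ u : G, u⁻¹ = u := fun u => inv_eq_of_mul_eq_one_right (hG u)
  unfold tmul
  rw [Finset.sum_eq_single x]
  · rw [hinv, Pi.single_eq_same, mul_one]
  · intro v _ hv
    simp [Pi.single_eq_of_ne hv]
  · simp

lemma aux_tmul_single_add (hG : ∀ x : G, x * x = 1) (F : G → G → k) {x y : G} (hxy : x ≠ y)
    (b : G → k) (w : G) :
    tmul F (Pi.single x (1:k) + Pi.single y (1:k)) b w
      = F x (x * w) * b (x * w) + F y (y * w) * b (y * w) := by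
  have hinv : ∀ u : G, u⁻¹ = u := fun u => inv_eq_of_mul_eq_one_right (hG u)
  unfold tmul
  simp only [Pi.add_apply]
  have key : ∀ v : G, F v (v⁻¹ * w) * ((Pi.single x (1:k) : G → k) v + (Pi.single y (1:k) : G → k) v) * b (v⁻¹ * w)
      = (if v = x then F x (x * w) * b (x * w) else 0)
        + (if v = y then F y (y * w) * b (y * w) else 0) := by
    intro v
    rcases eq_or_ne v x with rfl | hvx
    · simp [hinv, Pi.single_apply, hxy]
    · rcases eq_or_ne v y with rfl | hvy
      · simp [hinv, Pi.single_apply, hvx]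
      · simp [Pi.single_apply, hvx, hvy]
  simp [key, Finset.sum_add_distrib]

lemma aux_qE_single (x : G) : qE (Pi.single x (1:k)) = 1 := by
  simp [qE, Pi.single_apply, apply_ite (fun t : k => t ^ 2)]

lemma aux_qE_single_add {x y : G} (hxy : x ≠ y) :
    qE ((Pi.single x (1:k) + Pi.single y (1:k) : G → k)) = 2 := by
  have key : ∀ w : G, (Pi.single x (1:k) + Pi.single y (1:k) : G → k) w
      = if w = x then (1:k) else if w = y then 1 else 0 := by
    intro w
    rcases eq_or_ne w x with rfl | hwx
    · simp [Pi.single_apply, hxy.symm, hxy]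
    · rcases eq_or_ne w y with rfl | hwy
      · simp [Pi.single_apply, hwx]
      · simp [Pi.single_apply, hwx, hwy]
  rw [qE]
  simp only [key]
  rw [aux_sum_sq_two hxy]
  norm_num

end aux

/-- for `G ≅ (Z₂)ⁿ`, the Euclidean norm makes `k_F G` a composition
algebra iff `F² = 1` and `F(x,xz)F(y,yz) + F(x,yz)F(y,xz) = 0` for `x ≠ y`. -/
theorem stmt9 {G : Type*} [CommGroup G] [Fintype G] {k : Type*} [Field k]
    (h2 : (2 : k) ≠ 0) (hG : ∀ x : G, x * x = 1)
    (F : G → G → k) (hne : ∀ x y, F x y ≠ 0)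
    (hr : ∀ x, F x 1 = 1) (hl : ∀ x, F 1 x = 1) :
    (∀ a b : G → k, qE (tmul F a b) = qE a * qE b)
    ↔ ((∀ x y : G, F x y ^ 2 = 1) ∧
       (∀ x y z : G, x ≠ y →
         F x (x * z) * F y (y * z) + F x (y * z) * F y (x * z) = 0)) := by
  classical
  have hinv : ∀ u : G, u⁻¹ = u := fun u => inv_eq_of_mul_eq_one_right (hG u)
  have hcan : ∀ u v : G, u * (u * v) = v := fun u v => by
    rw [← mul_assoc, hG, one_mul]
  have hmeq : ∀ u v w : G, u * v = w ↔ v = u * w := by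
    intro u v w
    constructor
    · intro h; rw [← h, hcan]
    · intro h; rw [h, hcan]
  constructor
  · intro h
    have hsq : ∀ x y : G, F x y ^ 2 = 1 := by
      intro x y
      have hh := h (Pi.single x (1:k)) (Pi.single y (1:k))
      rw [aux_qE_single, aux_qE_single, one_mul] at hh
      rw [qE] at hh
      have key : ∀ w : G, tmul F (Pi.single x (1:k)) (Pi.single y (1:k)) w
          = if w = x * y then F x y else 0 := by
        intro w
        rw [aux_tmul_single hG]
        rw [Pi.single_apply]
        rcases eq_or_ne w (x * y) with rfl | hw
        · rw [if_pos rfl, if_pos (hcan x y), hcan, mul_one]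
        · rw [if_neg hw, if_neg, mul_zero]
          rw [hmeq]
          exact hw
      simp only [key] at hh
      have h2' : ∀ w : G, (if w = x * y then F x y else 0) ^ 2
          = if w = x * y then F x y ^ 2 else 0 := by
        intro w; split_ifs <;> simp
      simp only [h2'] at hh
      rwa [Finset.sum_ite_eq' Finset.univ (x*y), if_pos (Finset.mem_univ _)] at hh
    refine ⟨hsq, ?_⟩
    intro x y z hxy
    have hxzyz : x * z ≠ y * z := fun hc => hxy (mul_right_cancel hc)
    have hzz' : z ≠ x * (y * z) := by
      intro hc
      apply hxzyz
      rw [hmeq, ← hc]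
    have hh := h (Pi.single x (1:k) + Pi.single y (1:k)) (Pi.single (x*z) (1:k) + Pi.single (y*z) (1:k))
    rw [aux_qE_single_add hxy, aux_qE_single_add hxzyz] at hh
    have key : ∀ w : G, tmul F (Pi.single x (1:k) + Pi.single y (1:k))
          (Pi.single (x*z) (1:k) + Pi.single (y*z) (1:k)) w
        = if w = z then F x (x * z) + F y (y * z)
          else if w = x * (y * z) then F x (y * z) + F y (x * z) else 0 := by
      intro w
      rw [aux_tmul_single_add hG F hxy]
      rcases eq_or_ne w z with rfl | hw1
      · rw [if_pos rfl]
        simp [Pi.single_apply, hxzyz, hxzyz.symm]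
      · rw [if_neg hw1]
        rcases eq_or_ne w (x * (y * z)) with rfl | hw2
        · rw [if_pos rfl]
          have e1 : x * (x * (y * z)) = y * z := hcan _ _
          have e2 : y * (x * (y * z)) = x * z := by
            rw [mul_left_comm, hcan]
          rw [e1, e2]
          simp [Pi.single_apply, hxzyz, hxzyz.symm]
        · rw [if_neg hw2]
          have b1 : x * w ≠ x * z := fun hc => hw1 (by
            have := (hmeq x w (x * z)).mp hc; rwa [hcan] at this)
          have b2 : x * w ≠ y * z := fun hc => hw2 ((hmeq x w (y * z)).mp hc)
          have b3 : y * w ≠ x * z := fun hc => hw2 (by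
            have := (hmeq y w (x * z)).mp hc; rwa [mul_left_comm] at this)
          have b4 : y * w ≠ y * z := fun hc => hw1 (by
            have := (hmeq y w (y * z)).mp hc; rwa [hcan] at this)
          simp [Pi.single_apply, b1, b2, b3, b4]
    rw [qE] at hh
    simp only [key] at hh
    rw [aux_sum_sq_two hzz'] at hh
    have h2'' : 2 * (F x (x * z) * F y (y * z) + F x (y * z) * F y (x * z)) = 0 := by
      linear_combination hh - hsq x (x*z) - hsq y (y*z) - hsq x (y*z) - hsq y (x*z)
    exact (mul_eq_zero.mp h2'').resolve_left h2
  · rintro ⟨h1, hF⟩ a b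
    rw [qE, qE, qE]
    simp only [tmul, hinv]
    have step1 : ∑ z : G, (∑ x : G, F x (x * z) * a x * b (x * z)) ^ 2
        = ∑ x : G, ∑ y : G, ∑ z : G,
            (F x (x * z) * a x * b (x * z)) * (F y (y * z) * a y * b (y * z)) := by
      calc ∑ z : G, (∑ x : G, F x (x * z) * a x * b (x * z)) ^ 2
          = ∑ z : G, ∑ x : G, ∑ y : G,
              (F x (x * z) * a x * b (x * z)) * (F y (y * z) * a y * b (y * z)) := by
            refine Finset.sum_congr rfl fun z _ => ?_
            rw [sq, Finset.sum_mul_sum]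
        _ = ∑ x : G, ∑ z : G, ∑ y : G,
              (F x (x * z) * a x * b (x * z)) * (F y (y * z) * a y * b (y * z)) :=
            Finset.sum_comm
        _ = ∑ x : G, ∑ y : G, ∑ z : G,
              (F x (x * z) * a x * b (x * z)) * (F y (y * z) * a y * b (y * z)) :=
            Finset.sum_congr rfl fun x _ => Finset.sum_comm
    rw [step1]
    have split : ∀ x : G,
        (∑ y : G, ∑ z : G, (F x (x * z) * a x * b (x * z)) * (F y (y * z) * a y * b (y * z)))
        = (∑ z : G, (F x (x * z) * a x * b (x * z)) * (F x (x * z) * a x * b (x * z)))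
          + ∑ y ∈ Finset.univ.erase x, ∑ z : G,
              (F x (x * z) * a x * b (x * z)) * (F y (y * z) * a y * b (y * z)) :=
      fun x => (Finset.add_sum_erase _ _ (Finset.mem_univ x)).symm
    simp only [split]
    rw [Finset.sum_add_distrib]
    have diag : ∑ x : G, ∑ z : G,
          (F x (x * z) * a x * b (x * z)) * (F x (x * z) * a x * b (x * z))
        = (∑ x : G, a x ^ 2) * (∑ x : G, b x ^ 2) := by
      rw [Finset.sum_mul]
      refine Finset.sum_congr rfl fun x _ => ?_
      have e1 : ∀ z : G, (F x (x * z) * a x * b (x * z)) * (F x (x * z) * a x * b (x * z))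
          = a x ^ 2 * b (x * z) ^ 2 := fun z => by
        linear_combination (a x) ^ 2 * (b (x * z)) ^ 2 * h1 x (x * z)
      simp only [e1]
      rw [← Finset.mul_sum]
      congr 1
      exact Fintype.sum_equiv (Equiv.mulLeft x) _ _ (fun z => rfl)
    have off : ∀ x : G, ∀ y ∈ Finset.univ.erase x,
        (∑ z : G, (F x (x * z) * a x * b (x * z)) * (F y (y * z) * a y * b (y * z))) = 0 := by
      intro x y hy
      have hxy : x ≠ y := fun hc => (Finset.mem_erase.mp hy).1 hc.symm
      set T := ∑ z : G, (F x (x * z) * a x * b (x * z)) * (F y (y * z) * a y * b (y * z))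
        with hT
      have e1 : ∀ z : G, y * (x * y * z) = x * z := fun z => by
        rw [mul_assoc x y z, mul_left_comm x y z]; exact hcan _ _
      have e2 : ∀ z : G, x * (x * y * z) = y * z := fun z => by
        rw [mul_assoc x y z]; exact hcan _ _
      have reT : T = ∑ z : G,
          (F x (y * z) * a x * b (y * z)) * (F y (x * z) * a y * b (x * z)) := by
        rw [hT]
        refine Fintype.sum_equiv (Equiv.mulLeft (x * y)) _ _ (fun z => ?_)
        simp only [Equiv.coe_mulLeft]
        rw [e1, e2]
      have h2T : T + T = 0 := by
        nth_rewrite 2 [reT]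
        rw [hT, ← Finset.sum_add_distrib]
        refine Finset.sum_eq_zero fun z _ => ?_
        linear_combination (a x * a y * b (x * z) * b (y * z)) * hF x y z hxy
      have h2T' : 2 * T = 0 := by rw [two_mul]; exact h2T
      exact (mul_eq_zero.mp h2T').resolve_left h2
    have offz : ∑ x : G, (∑ y ∈ Finset.univ.erase x, ∑ z : G,
        (F x (x * z) * a x * b (x * z)) * (F y (y * z) * a y * b (y * z))) = 0 :=
      Finset.sum_eq_zero fun x _ => Finset.sum_eq_zero (off x)
    rw [diag, offz, add_zero]
end

section
/- Let G = (Z₂)ⁿ, char k ≠ 2, and suppose F² = 1 and F satisfies F(x,xz)F(y,yz) + F(x,yz)F(y,xz) = 0 for all x ≠ y in G. Then F(x,xy) + F(x,y) = 0 for all x,y ∈ G with x ≠ e, and F(x,yz)F(y,xz) + F(x,z)F(y,z) = 0 for all x,y,z with x ≠ e, y ≠ e, x ≠ y. -/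
/-- consequences of the composition-algebra conditions on the cochain. -/
theorem stmt10 {G : Type*} [CommGroup G] {k : Type*} [Field k]
    (h2 : (2 : k) ≠ 0) (hG : ∀ x : G, x * x = 1)
    (F : G → G → k) (hne : ∀ x y, F x y ≠ 0)
    (hr : ∀ x, F x 1 = 1) (hl : ∀ x, F 1 x = 1)
    (hsq : ∀ x y : G, F x y ^ 2 = 1)
    (hid : ∀ x y z : G, x ≠ y →
      F x (x * z) * F y (y * z) + F x (y * z) * F y (x * z) = 0) :
    (∀ x y : G, x ≠ 1 → F x (x * y) + F x y = 0) ∧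
    (∀ x y z : G, x ≠ 1 → y ≠ 1 → x ≠ y →
      F x (y * z) * F y (x * z) + F x z * F y z = 0) := by
  have h1 : ∀ x y : G, x ≠ 1 → F x (x * y) + F x y = 0 := by
    intro x y hx
    have := hid x 1 y hx
    simpa [hl] using this
  refine ⟨h1, fun x y z hx hy hxy => ?_⟩
  have := hid x y z hxy
  have e1 : F x (x * z) = -F x z := by linear_combination h1 x z hx
  have e2 : F y (y * z) = -F y z := by linear_combination h1 y z hy
  rw [e1, e2] at this
  linear_combination this
end

section
/- Let G = (Z₂)ⁿ, char k ≠ 2, and suppose the Euclidean norm makes k_F G a composition algebra (equivalently F² = 1 and F(x,xz)F(y,yz) + F(x,yz)F(y,xz) = 0 for x ≠ y). Then k_F G is an alternative algebra. -/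
open Finset

theorem Fintype.sum_eq_zero_of_add_comp_eq_zero {ι R : Type*} [Fintype ι] [Ring R]
    [NoZeroDivisors R] (h2 : (2 : R) ≠ 0) (σ : ι ≃ ι) {f : ι → R}
    (hf : ∀ i, f i + f (σ i) = 0) : ∑ i, f i = 0 := by
  have : 2 * ∑ i, f i = 0 := by
    rw [two_mul]
    nth_rewrite 2 [← Equiv.sum_comp σ f]
    rw [← sum_add_distrib]
    exact Finset.sum_eq_zero fun i _ => hf i
  exact (mul_eq_zero.mp this).resolve_left h2

section

variable {G : Type*} {k : Type*} [Field k]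

/-- `(e_x e_y) e_w - e_x (e_y e_w) = assocCoeff F x y w • e_{xyw}`. -/
def assocCoeff [Mul G] (F : G → G → k) (x y w : G) : k :=
  F x y * F (x * y) w - F y w * F x (y * w)

theorem tmul_tmul_left_apply [Group G] [Fintype G] (F : G → G → k) (p q r : G → k) (z : G) :
    tmul F (tmul F p q) r z =
      ∑ x, ∑ y, F x y * F (x * y) ((x * y)⁻¹ * z) * (p x * q y * r ((x * y)⁻¹ * z)) := by
  simp only [tmul, sum_mul, mul_sum]
  rw [sum_comm]
  refine sum_congr rfl fun x _ => ?_
  rw [← Equiv.sum_comp (Equiv.mulLeft x)]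
  refine sum_congr rfl fun y _ => ?_
  simp only [Equiv.coe_mulLeft, inv_mul_cancel_left]
  ring

theorem tmul_tmul_right_apply [Group G] [Fintype G] (F : G → G → k) (p q r : G → k) (z : G) :
    tmul F p (tmul F q r) z =
      ∑ x, ∑ y, F y ((x * y)⁻¹ * z) * F x (y * ((x * y)⁻¹ * z)) *
        (p x * q y * r ((x * y)⁻¹ * z)) := by
  simp only [tmul, mul_sum]
  refine sum_congr rfl fun x _ => sum_congr rfl fun y _ => ?_
  simp only [mul_inv_rev, ← mul_assoc, mul_inv_cancel, one_mul]
  ring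

theorem tmul_tmul_sub_tmul_tmul_apply [Group G] [Fintype G] (F : G → G → k) (p q r : G → k)
    (z : G) :
    tmul F (tmul F p q) r z - tmul F p (tmul F q r) z =
      ∑ x, ∑ y, assocCoeff F x y ((x * y)⁻¹ * z) * (p x * q y * r ((x * y)⁻¹ * z)) := by
  simp only [tmul_tmul_left_apply, tmul_tmul_right_apply, ← sum_sub_distrib, assocCoeff]
  refine sum_congr rfl fun x _ => sum_congr rfl fun y _ => ?_
  ring

theorem tmul_left_alternative [CommGroup G] [Fintype G] (h2 : (2 : k) ≠ 0) {F : G → G → k}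
    (hF : ∀ x y w, assocCoeff F x y w + assocCoeff F y x w = 0) (a b : G → k) :
    tmul F (tmul F a a) b = tmul F a (tmul F a b) := by
  funext z
  rw [← sub_eq_zero, tmul_tmul_sub_tmul_tmul_apply, ← Fintype.sum_prod_type']
  refine Fintype.sum_eq_zero_of_add_comp_eq_zero h2 (Equiv.prodComm G G) fun ⟨x, y⟩ => ?_
  simp only [Equiv.prodComm_apply, Prod.swap, mul_comm y x]
  linear_combination (a x * a y * b ((x * y)⁻¹ * z)) * hF x y ((x * y)⁻¹ * z)

theorem tmul_right_alternative [CommGroup G] [Fintype G] (h2 : (2 : k) ≠ 0) {F : G → G → k}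
    (hF : ∀ x y w, assocCoeff F x y w + assocCoeff F x w y = 0) (a b : G → k) :
    tmul F (tmul F a b) b = tmul F a (tmul F b b) := by
  funext z
  rw [← sub_eq_zero, tmul_tmul_sub_tmul_tmul_apply]
  refine Finset.sum_eq_zero fun x _ => ?_
  have hσ : Function.Involutive fun y => (x * y)⁻¹ * z := fun y => by
    simp [mul_comm, mul_left_comm]
  refine Fintype.sum_eq_zero_of_add_comp_eq_zero h2 (hσ.toPerm _) fun y => ?_
  simp only [Function.Involutive.coe_toPerm, hσ y]
  linear_combination (a x * b y * b ((x * y)⁻¹ * z)) * hF x y ((x * y)⁻¹ * z)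

theorem assocCoeff_mul_eq_neg_mul_assocCoeff [CommGroup G] {F : G → G → k} {ε : G → k}
    (hε : ∀ x y, F x y * ε (x * y) = ε x * ε y * F y x) (x y w : G) :
    assocCoeff F x y w * ε (x * y * w) = -(ε x * ε y * ε w) * assocCoeff F w y x := by
  have h1 := hε (x * y) w
  have h2 := hε x y
  have h3 := hε y w
  have h4 := hε x (y * w)
  rw [← mul_assoc] at h4
  simp only [assocCoeff, mul_comm w y, mul_comm y x]
  linear_combination F x y * h1 + ε w * F w (x * y) * h2 - F y w * h4 - ε x * F (y * w) x * h3

theorem assocCoeff_add_swap₂₃ [CommGroup G] {F : G → G → k} {ε : G → k}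
    (hε₀ : ∀ u, ε u ≠ 0) (hε : ∀ x y, F x y * ε (x * y) = ε x * ε y * F y x)
    (hF : ∀ x y w, assocCoeff F x y w + assocCoeff F y x w = 0) (x y w : G) :
    assocCoeff F x y w + assocCoeff F x w y = 0 := by
  have hxyw := assocCoeff_mul_eq_neg_mul_assocCoeff hε x y w
  have hxwy := assocCoeff_mul_eq_neg_mul_assocCoeff hε x w y
  rw [mul_right_comm x w y] at hxwy
  refine (mul_eq_zero.mp ?_).resolve_right (hε₀ (x * y * w))
  linear_combination hxyw + hxwy - ε x * ε y * ε w * hF w y x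

structure IsCompositionCocycle [MulOneClass G] (F : G → G → k) : Prop where
  map_one_right : ∀ x, F x 1 = 1
  map_one_left : ∀ x, F 1 x = 1
  sq_eq_one : ∀ x y, F x y ^ 2 = 1
  cross : ∀ x y z, x ≠ y → F x (x * z) * F y (y * z) + F x (y * z) * F y (x * z) = 0

def conjSign [One G] [DecidableEq G] (x : G) : k := if x = 1 then 1 else -1

theorem conjSign_ne_zero [One G] [DecidableEq G] (x : G) : (conjSign x : k) ≠ 0 := by
  unfold conjSign
  split_ifs <;> norm_num

namespace IsCompositionCocycle

variable [CommGroup G] {F : G → G → k}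

theorem apply_mul_right (hF : IsCompositionCocycle F) {x : G} (hx : x ≠ 1) (z : G) :
    F x (x * z) = -F x z := by
  have h := hF.cross x 1 z hx
  simp only [hF.map_one_left, one_mul, mul_one] at h
  linear_combination h

theorem apply_self (hF : IsCompositionCocycle F) {x : G} (hx : x ≠ 1) : F x x = -1 := by
  simpa [hF.map_one_right] using hF.apply_mul_right hx 1

theorem apply_swap (hF : IsCompositionCocycle F) {x y : G} (hx : x ≠ 1) (hy : y ≠ 1)
    (hxy : x ≠ y) : F y x = -F x y := by
  have h := hF.cross x y 1 hxy
  simp only [mul_one, hF.apply_self hx, hF.apply_self hy] at h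
  linear_combination F x y * h - F y x * hF.sq_eq_one x y

theorem mul_conjSign [DecidableEq G] (hF : IsCompositionCocycle F) (hG : ∀ x : G, x * x = 1)
    (x y : G) : F x y * conjSign (x * y) = conjSign x * conjSign y * F y x := by
  by_cases hx : x = 1
  · simp [hx, conjSign, hF.map_one_left, hF.map_one_right]
  by_cases hy : y = 1
  · simp [hy, conjSign, hF.map_one_left, hF.map_one_right]
  by_cases hxy : x = y
  · simp [conjSign, hxy, hG, hy]
  have hxy₁ : x * y ≠ 1 := fun h =>
    hxy (by rw [mul_eq_one_iff_eq_inv.mp h, inv_eq_of_mul_eq_one_left (hG y)])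
  simp only [conjSign, if_neg hx, if_neg hy, if_neg hxy₁, hF.apply_swap hx hy hxy]
  ring

theorem assocCoeff_add_swap₁₂ (hF : IsCompositionCocycle F) (hG : ∀ x : G, x * x = 1)
    (x y w : G) : assocCoeff F x y w + assocCoeff F y x w = 0 := by
  by_cases hx : x = 1
  · simp [hx, assocCoeff, hF.map_one_left, hF.map_one_right]
  by_cases hy : y = 1
  · simp [hy, assocCoeff, hF.map_one_left, hF.map_one_right]
  by_cases hxy : x = y
  · have hxx : assocCoeff F x x w = 0 := by
      rw [assocCoeff, hG, hF.map_one_left, hF.apply_self hx, hF.apply_mul_right hx]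
      linear_combination hF.sq_eq_one x w
    rw [← hxy, hxx, add_zero]
  have h := hF.cross x y (x * w) hxy
  rw [← mul_assoc x x, hG, one_mul, hF.apply_mul_right hy, mul_left_comm y x,
    hF.apply_mul_right hx] at h
  rw [assocCoeff, assocCoeff, hF.apply_swap hx hy hxy, mul_comm y x]
  linear_combination h

end IsCompositionCocycle

end

theorem stmt11_general {G : Type*} [CommGroup G] [Fintype G] {k : Type*} [Field k]
    (h2 : (2 : k) ≠ 0) (hG : ∀ x : G, x * x = 1)
    (F : G → G → k)
    (hr : ∀ x, F x 1 = 1) (hl : ∀ x, F 1 x = 1)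
    (hsq : ∀ x y : G, F x y ^ 2 = 1)
    (hid : ∀ x y z : G, x ≠ y →
      F x (x * z) * F y (y * z) + F x (y * z) * F y (x * z) = 0) :
    ∀ a b : G → k,
      tmul F (tmul F a a) b = tmul F a (tmul F a b) ∧
      tmul F (tmul F a b) b = tmul F a (tmul F b b) := by
  classical
  have hF : IsCompositionCocycle F := ⟨hr, hl, hsq, hid⟩
  have hleft := hF.assocCoeff_add_swap₁₂ hG
  have hright := assocCoeff_add_swap₂₃ conjSign_ne_zero (hF.mul_conjSign hG) hleft
  exact fun a b => ⟨tmul_left_alternative h2 hleft a b, tmul_right_alternative h2 hright a b⟩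

/-- for `G ≅ (Z₂)ⁿ`, if the composition-algebra conditions hold then
`k_F G` is alternative. -/
theorem stmt11 {G : Type*} [CommGroup G] [Fintype G] {k : Type*} [Field k]
    (h2 : (2 : k) ≠ 0) (hG : ∀ x : G, x * x = 1)
    (F : G → G → k) (hne : ∀ x y, F x y ≠ 0)
    (hr : ∀ x, F x 1 = 1) (hl : ∀ x, F 1 x = 1)
    (hsq : ∀ x y : G, F x y ^ 2 = 1)
    (hid : ∀ x y z : G, x ≠ y →
      F x (x * z) * F y (y * z) + F x (y * z) * F y (x * z) = 0) :
    ∀ a b : G → k,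
      tmul F (tmul F a a) b = tmul F a (tmul F a b) ∧
      tmul F (tmul F a b) b = tmul F a (tmul F b b) :=
  stmt11_general h2 hG F hr hl hsq hid
end

section
/- Cayley–Dickson doubling as cochain: let G be a finite abelian group, F a 2-cochain on G, s: G → k* with s(e) = 1, and α ∈ k*. Define Ḡ = G × Z₂ and a cochain F̄ on Ḡ by F̄(x,y) = F(x,y), F̄(x,vy) = s(x)F(x,y), F̄(vx,y) = F(y,x), F̄(vx,vy) = α s(x)F(y,x), where x denotes (x,0) and vx denotes (x,1). Then F̄ is a 2-cochain on Ḡ (pointwise invertible with F̄(e,g) = F̄(g,e) = 1), and if σ(x) = s(x)x is a strong involution of k_F G, the algebra k_{F̄} Ḡ coincides with the Cayley–Dickson extension of k_F G with parameter α: (a + vb)·(c + vd) = (a·c + α d·σ(b)) + v(σ(a)·d + c·b). -/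
abbrev Z2 := Multiplicative (ZMod 2)

/-- The nontrivial element `ν` of `Z₂`, so `vx = (x, ν)`. -/
def vv : Z2 := Multiplicative.ofAdd 1

/-- The Cayley–Dickson doubled cochain `F̄` on `Ḡ = G × Z₂`:
`F̄(x,y) = F(x,y)`, `F̄(x,vy) = s(x)F(x,y)`, `F̄(vx,y) = F(y,x)`, `F̄(vx,vy) = α s(x) F(y,x)`. -/
def Fbar {G : Type*} {k : Type*} [Mul k] (F : G → G → k) (s : G → k) (α : k) :
    G × Z2 → G × Z2 → k :=
  fun p q =>
    if p.2 = 1 then (if q.2 = 1 then F p.1 q.1 else s p.1 * F p.1 q.1)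
    else (if q.2 = 1 then F q.1 p.1 else α * (s p.1 * F q.1 p.1))

/-- Inclusion of `A` as the first summand of `Ā = A ⊕ vA`. -/
def iota0 {G : Type*} {k : Type*} [Zero k] (a : G → k) : G × Z2 → k :=
  fun p => if p.2 = 1 then a p.1 else 0

/-- Inclusion of `A` as the second summand `vA` of `Ā = A ⊕ vA`. -/
def iota1 {G : Type*} {k : Type*} [Zero k] (b : G → k) : G × Z2 → k :=
  fun p => if p.2 = 1 then 0 else b p.1

/-! Both claims are a direct computation. The product in `k_{F̄}Ḡ` at `(z, ε)` splits into the
`x`- and `vx`-parts of the first factor; the parts in which the twist of `F̄` carries `F(y,x)`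
instead of `F(x,y)` become ordinary products in `k_F G` after the substitution `x ↦ x⁻¹z`,
which is an involution of `G` because `G` is abelian. -/

lemma Z2_eq_one_or_eq_vv (ε : Z2) : ε = 1 ∨ ε = vv := by revert ε; decide

lemma vv_ne_one : vv ≠ 1 := by decide

lemma vv_inv : vv⁻¹ = vv := by decide

lemma vv_mul_vv : vv * vv = 1 := by decide

lemma Z2_sum_eq {M : Type*} [AddCommMonoid M] (f : Z2 → M) : ∑ ε, f ε = f 1 + f vv := by
  rw [show (Finset.univ : Finset Z2) = {1, vv} by decide, Finset.sum_pair vv_ne_one.symm]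

section Cochain

variable {G k : Type*} [MonoidWithZero k] (F : G → G → k) (s : G → k) (α : k)

lemma Fbar_one_right [One G] (hr : ∀ x, F x 1 = 1) (hl : ∀ x, F 1 x = 1) (g : G × Z2) :
    Fbar F s α g 1 = 1 := by
  rcases Z2_eq_one_or_eq_vv g.2 with h | h <;> simp [Fbar, h, hr, hl, vv_ne_one]

lemma Fbar_one_left [One G] (hl : ∀ x, F 1 x = 1) (hse : s 1 = 1) (g : G × Z2) :
    Fbar F s α 1 g = 1 := by
  rcases Z2_eq_one_or_eq_vv g.2 with h | h <;> simp [Fbar, h, hl, hse, vv_ne_one]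

lemma Fbar_ne_zero [NoZeroDivisors k] (hne : ∀ x y, F x y ≠ 0) (hs : ∀ x, s x ≠ 0) (hα : α ≠ 0)
    (g h : G × Z2) : Fbar F s α g h ≠ 0 := by
  unfold Fbar
  split_ifs
  · exact hne _ _
  · exact mul_ne_zero (hs _) (hne _ _)
  · exact hne _ _
  · exact mul_ne_zero hα (mul_ne_zero (hs _) (hne _ _))

end Cochain

lemma sum_inv_mul_comm {G M : Type*} [CommGroup G] [Fintype G] [AddCommMonoid M]
    (f : G → G → M) (z : G) : ∑ x, f x (x⁻¹ * z) = ∑ x, f (x⁻¹ * z) x := by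
  have hinv : ∀ x : G, (x⁻¹ * z)⁻¹ * z = x := fun x => by
    rw [mul_inv_rev, inv_inv, mul_comm _ x, inv_mul_cancel_right]
  exact Fintype.sum_equiv (Function.Involutive.toPerm (fun x : G => x⁻¹ * z) hinv) _ _ fun x => by
    show _ = f ((x⁻¹ * z)⁻¹ * z) (x⁻¹ * z)
    rw [hinv]

section Product

variable {G : Type*} [Fintype G] {k : Type*} [Field k]

lemma tmul_prod_Z2_apply [Group G] (Φ : G × Z2 → G × Z2 → k) (f g : G × Z2 → k)
    (z : G) (ε : Z2) :
    tmul Φ f g (z, ε) = ∑ x, (Φ (x, 1) (x⁻¹ * z, ε) * f (x, 1) * g (x⁻¹ * z, ε)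
      + Φ (x, vv) (x⁻¹ * z, vv * ε) * f (x, vv) * g (x⁻¹ * z, vv * ε)) := by
  simp only [tmul, Fintype.sum_prod_type, Z2_sum_eq, Prod.inv_mk, Prod.mk_mul_mk, inv_one,
    one_mul, vv_inv]

variable [CommGroup G] (F : G → G → k) (s : G → k) (α : k) (a b c d : G → k) (z : G)

lemma tmul_Fbar_iota_apply_one :
    tmul (Fbar F s α) (iota0 a + iota1 b) (iota0 c + iota1 d) (z, 1)
      = tmul F a c z + α * tmul F d (sigmaMap s b) z := by
  rw [tmul_prod_Z2_apply, Finset.sum_add_distrib]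
  congr 1
  · simp [Fbar, iota0, iota1, tmul]
  · simp only [Fbar, iota0, iota1, tmul, sigmaMap, Pi.add_apply, mul_one, vv_ne_one,
      if_false, zero_add, Finset.mul_sum]
    rw [sum_inv_mul_comm (fun x y => α * (F x y * d x * (s y * b y)))]
    exact Finset.sum_congr rfl fun x _ => by ring

lemma tmul_Fbar_iota_apply_vv :
    tmul (Fbar F s α) (iota0 a + iota1 b) (iota0 c + iota1 d) (z, vv)
      = tmul F (sigmaMap s a) d z + tmul F c b z := by
  rw [tmul_prod_Z2_apply, Finset.sum_add_distrib]
  congr 1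
  · simp only [Fbar, iota0, iota1, tmul, sigmaMap, Pi.add_apply, vv_ne_one,
      if_true, if_false, zero_add]
    exact Finset.sum_congr rfl fun x _ => by ring
  · simp only [Fbar, iota0, iota1, tmul, Pi.add_apply, vv_mul_vv, vv_ne_one,
      if_true, if_false, add_zero]
    rw [sum_inv_mul_comm (fun x y => F x y * c x * b y)]
    exact Finset.sum_congr rfl fun x _ => by ring

end Product

/-- `F̄` is a 2-cochain on `Ḡ = G × Z₂`, and if `σ(x) = s(x)x` is a strong
involution then `k_{F̄}Ḡ` is the Cayley–Dickson extension of `k_F G` with parameter `α`: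
`(a + vb)(c + vd) = (a·c + α d·σ(b)) + v(σ(a)·d + c·b)`. -/
theorem stmt12 {G : Type*} [CommGroup G] [Fintype G] [DecidableEq G] {k : Type*} [Field k]
    (F : G → G → k) (hne : ∀ x y, F x y ≠ 0)
    (hr : ∀ x, F x 1 = 1) (hl : ∀ x, F 1 x = 1)
    (s : G → k) (hs : ∀ x, s x ≠ 0) (hse : s 1 = 1)
    (α : k) (hα : α ≠ 0) :
    ((∀ g : G × Z2, Fbar F s α g 1 = 1 ∧ Fbar F s α 1 g = 1) ∧
     (∀ g h : G × Z2, Fbar F s α g h ≠ 0)) ∧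
    (IsStrongInvolution F s →
      ∀ a b c d : G → k,
        tmul (Fbar F s α) (iota0 a + iota1 b) (iota0 c + iota1 d)
          = iota0 (tmul F a c + α • tmul F d (sigmaMap s b))
            + iota1 (tmul F (sigmaMap s a) d + tmul F c b)) := by
  refine ⟨⟨fun g => ⟨Fbar_one_right F s α hr hl g, Fbar_one_left F s α hl hse g⟩,
    Fbar_ne_zero F s α hne hs hα⟩, fun _ a b c d => ?_⟩
  funext ⟨z, ε⟩
  rcases Z2_eq_one_or_eq_vv ε with rfl | rfl
  · simp [tmul_Fbar_iota_apply_one, iota0, iota1]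
  · simp [tmul_Fbar_iota_apply_vv, iota0, iota1, vv_ne_one]
end

section
/- Standard Cayley–Dickson with α = -1 and s(x) = F(x,x): if F(x,x) = -1 for all x ≠ e in G, then the doubled cochain F̄ on Ḡ = G × Z₂ also satisfies F̄(w,w) = -1 for all w ≠ e in Ḡ; moreover if F² = 1 then F̄² = 1, and if R(x,y) := F(x,y)/F(y,x) is altercommutative (equal to -1 for distinct nonidentity x,y) then R̄ is altercommutative on Ḡ. -/
/-- The standard Cayley–Dickson doubling: `s(x) = F(x,x)` and `α = -1`. -/
def FbarStd {G : Type*} {k : Type*} [Field k] (F : G → G → k) : G × Z2 → G × Z2 → k :=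
  Fbar F (fun x => F x x) (-1)

/-- `R` is altercommutative: `R(x,y) = 1` if `x = e` or `y = e` or `x = y`,
and `R(x,y) = -1` otherwise. -/
def Altercomm {G : Type*} [Group G] [DecidableEq G] {k : Type*} [Field k]
    (R : G → G → k) : Prop :=
  ∀ x y : G, R x y = if x = 1 ∨ y = 1 ∨ x = y then 1 else -1

/-- properties preserved by the standard Cayley–Dickson process
(`α = -1`, `s(x) = F(x,x)`), assuming `F(x,x) = -1` for all `x ≠ e`. -/
theorem stmt13 {G : Type*} [CommGroup G] [DecidableEq G] {k : Type*} [Field k]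
    (h2 : (2 : k) ≠ 0) (hG : ∀ x : G, x * x = 1)
    (F : G → G → k) (hne : ∀ x y, F x y ≠ 0)
    (hr : ∀ x, F x 1 = 1) (hl : ∀ x, F 1 x = 1)
    (hd : ∀ x : G, x ≠ 1 → F x x = -1) :
    (∀ w : G × Z2, w ≠ 1 → FbarStd F w w = -1) ∧
    ((∀ x y : G, F x y ^ 2 = 1) → ∀ w z : G × Z2, FbarStd F w z ^ 2 = 1) ∧
    (Altercomm (fun x y : G => F x y / F y x) →
      Altercomm (fun w z : G × Z2 => FbarStd F w z / FbarStd F z w)) := by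
  have hZ2 : ∀ a b : Z2, a ≠ 1 → b ≠ 1 → a = b := by decide
  have hsq : ∀ x : G, F x x * F x x = 1 := by
    intro x
    by_cases hx : x = 1
    · subst hx; rw [hr]; ring
    · rw [hd x hx]; ring
  refine ⟨?_, ?_, ?_⟩
  · rintro ⟨x, a⟩ hw
    by_cases ha : a = 1
    · subst ha
      have hx : x ≠ 1 := by
        intro h; exact hw (by simp [h, Prod.ext_iff])
      simp only [FbarStd, Fbar, if_pos rfl]
      exact hd x hx
    · simp only [FbarStd, Fbar, if_neg ha]
      rw [neg_one_mul, hsq]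
  · intro hF2
    rintro ⟨x, a⟩ ⟨y, b⟩
    by_cases ha : a = 1 <;> by_cases hb : b = 1 <;>
      simp [FbarStd, Fbar, ha, hb, mul_pow, hF2]
  · intro hR
    rintro ⟨x, a⟩ ⟨y, b⟩
    by_cases ha : a = 1 <;> by_cases hb : b = 1
    · subst ha; subst hb
      have := hR x y
      simp only at this
      simp [FbarStd, Fbar, Prod.ext_iff, this]
    · subst ha
      simp [FbarStd, Fbar, Prod.ext_iff, hb, Ne.symm hb]
      rw [mul_div_assoc, div_self (hne x y), mul_one]
      by_cases hx : x = 1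
      · simp [hx, hr]
      · simp [hx, hd x hx]
    · subst hb
      simp [FbarStd, Fbar, Prod.ext_iff, ha]
      by_cases hy : y = 1
      · simp [hy, hr, hl, div_self (hne (1:G) x)]
      · simp only [hy, if_false, hd y hy]
        rw [div_eq_iff (mul_ne_zero (neg_ne_zero.mpr one_ne_zero) (hne y x))]
        ring
    · have hab : a = b := hZ2 a b ha hb
      subst hab
      simp [FbarStd, Fbar, Prod.ext_iff, ha]
      have hxy := hR x y
      simp only at hxy
      rw [div_eq_iff (hne y x)] at hxy
      rw [div_eq_iff (mul_ne_zero (hne y y) (hne x y)), hxy]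
      by_cases hx : x = 1 <;> by_cases hy : y = 1
      · simp [hx, hy, hr]
      · have : ¬ x = y := by rw [hx]; exact fun h => hy h.symm
        simp [hx, hy, Ne.symm hy, this, hl, hr, hd y hy]
      · have : ¬ x = y := fun h => hx (h.trans hy)
        simp [hx, hy, this, hl, hr, hd x hx]
      · by_cases hxy2 : x = y
        · subst hxy2; simp [hd x hx]
        · simp [hx, hy, hxy2, hd x hx, hd y hy]
end

section
/- For the octonion cochain F(x,y) = (-1)^{f(x,y)} on G = (Z₂)³ with f(x,y) = Σ_{i≤j} x_i y_j + y_1x_2x_3 + x_1y_2x_3 + x_1x_2y_3, the coboundary 3-cocycle φ = ∂F is not identically 1; hence the octonions viewed as k_F G are nonassociative. -/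
/-- The twisted product on the group algebra of an additive group. -/
def tmulA {G : Type*} [AddCommGroup G] [Fintype G] {k : Type*} [Field k]
    (F : G → G → k) (a b : G → k) : G → k :=
  fun z => ∑ x : G, F x (z - x) * a x * b (z - x)

/-- The coboundary 3-cocycle of a 2-cochain on an additive group. -/
def cobA {G : Type*} [AddCommGroup G] {k : Type*} [Field k]
    (F : G → G → k) (x y z : G) : k :=
  F x y * F (x + y) z / (F y z * F x (y + z))

/-- The octonion exponent function on `(Z₂)³`. -/
def fOct (x y : Fin 3 → ZMod 2) : ZMod 2 :=
  (∑ i : Fin 3, ∑ j : Fin 3, if i ≤ j then x i * y j else 0)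
    + y 0 * x 1 * x 2 + x 0 * y 1 * x 2 + x 0 * x 1 * y 2

/-- The octonion cochain `F(x,y) = (-1)^{f(x,y)}`. -/
def FOct (k : Type*) [Field k] (x y : Fin 3 → ZMod 2) : k :=
  (-1 : k) ^ (fOct x y).val

/-- delta function -/
def deltaA {G : Type*} [DecidableEq G] (k : Type*) [Field k] (x : G) : G → k :=
  fun t => if t = x then 1 else 0

lemma tmul_delta {G : Type*} [AddCommGroup G] [Fintype G] [DecidableEq G]
    {k : Type*} [Field k] (F : G → G → k) (x y : G) :
    tmulA F (deltaA k x) (deltaA k y) = fun z => if z = x + y then F x y else 0 := by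
  funext z
  simp only [tmulA, deltaA]
  rw [Finset.sum_eq_single x]
  · simp only [if_pos rfl, mul_one]
    by_cases h : z = x + y
    · subst h
      simp [show x + y - x = y from by abel]
    · rw [if_neg (fun hh => h (sub_eq_iff_eq_add'.mp hh)), if_neg h, mul_zero]
  · intro b _ hb; simp [hb]
  · simp

lemma tmul_delta_apply {G : Type*} [AddCommGroup G] [Fintype G] [DecidableEq G]
    {k : Type*} [Field k] (F : G → G → k) (x y z : G) :
    tmulA F (tmulA F (deltaA k x) (deltaA k y)) (deltaA k z) (x + y + z)
      = F (x + y) z * F x y := by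
  rw [tmul_delta]
  simp only [tmulA, deltaA]
  rw [Finset.sum_eq_single (x + y)]
  · simp [show x + y + z - (x + y) = z from by abel]
  · intro b _ hb
    simp [hb]
  · simp

lemma tmul_delta_apply' {G : Type*} [AddCommGroup G] [Fintype G] [DecidableEq G]
    {k : Type*} [Field k] (F : G → G → k) (x y z : G) :
    tmulA F (deltaA k x) (tmulA F (deltaA k y) (deltaA k z)) (x + y + z)
      = F x (y + z) * F y z := by
  rw [tmul_delta]
  simp only [tmulA, deltaA]
  rw [Finset.sum_eq_single x]
  · simp [show x + y + z - x = y + z from by abel]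
  · intro b _ hb
    simp [hb]
  · simp

/-- the octonion 3-cocycle `φ = ∂F` is not identically 1, hence the
octonions as `k_F G` are nonassociative. -/
theorem stmt16 {k : Type*} [Field k] (h2 : (2 : k) ≠ 0) :
    (∃ x y z : Fin 3 → ZMod 2, cobA (FOct k) x y z ≠ 1) ∧
    ¬ (∀ a b c : (Fin 3 → ZMod 2) → k,
        tmulA (FOct k) (tmulA (FOct k) a b) c
          = tmulA (FOct k) a (tmulA (FOct k) b c)) := by
  have hne : (-1 : k) ≠ 1 := by
    intro h
    exact h2 (by linear_combination -h)
  set x : Fin 3 → ZMod 2 := ![0, 0, 1] with hx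
  set y : Fin 3 → ZMod 2 := ![0, 1, 0] with hy
  set z : Fin 3 → ZMod 2 := ![1, 0, 0] with hz
  have h1 : fOct x y = 0 := by decide
  have h2' : fOct (x + y) z = 1 := by decide
  have h3 : fOct y z = 0 := by decide
  have h4 : fOct x (y + z) = 0 := by decide
  have hFxy : FOct k x y = 1 := by
    rw [FOct, h1, show ((0 : ZMod 2)).val = 0 from rfl, pow_zero]
  have hFxyz : FOct k (x + y) z = -1 := by
    rw [FOct, h2', show ((1 : ZMod 2)).val = 1 from rfl, pow_one]
  have hFyz : FOct k y z = 1 := by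
    rw [FOct, h3, show ((0 : ZMod 2)).val = 0 from rfl, pow_zero]
  have hFxyz' : FOct k x (y + z) = 1 := by
    rw [FOct, h4, show ((0 : ZMod 2)).val = 0 from rfl, pow_zero]
  constructor
  · refine ⟨x, y, z, ?_⟩
    rw [cobA, hFxy, hFxyz, hFyz, hFxyz']
    simpa using hne
  · intro hassoc
    have heq := congrFun (hassoc (deltaA k x) (deltaA k y) (deltaA k z)) (x + y + z)
    rw [tmul_delta_apply, tmul_delta_apply'] at heq
    rw [hFxy, hFxyz, hFyz, hFxyz'] at heq
    exact hne (by linear_combination heq)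
end

section
/- Let Ḡ = G × Z₂ with the Cayley–Dickson cochain F̄ built from a 2-cochain F and function s on G satisfying the involution conditions (s² = 1, s(x)s(y)/s(xy) = F(x,y)/F(y,x)). Then the associativity cocycles satisfy φ̄(x,y,z) = φ(x,y,z), φ̄(vx,y,z) = R(y,z)φ(x,y,z), φ̄(x,vy,z) = R(y,z)R(xy,z)φ(x,y,z), φ̄(x,y,vz) = R(x,y)φ(x,y,z), φ̄(vx,vy,z) = R(xy,z)φ(x,y,z), φ̄(vx,y,vz) = R(y,z)R(x,y)φ(x,y,z), φ̄(x,vy,vz) = R(x,yz)φ(x,y,z), φ̄(vx,vy,vz) = R(xy,z)R(x,y)φ(x,y,z), where R(x,y) = F(x,y)/F(y,x). -/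
/-- the associativity cocycle `φ̄ = ∂F̄` of the Cayley–Dickson extension in
terms of `φ = ∂F` and `R(x,y) = F(x,y)/F(y,x)`. -/
theorem stmt17 {G : Type*} [CommGroup G] {k : Type*} [Field k]
    (h2 : (2 : k) ≠ 0)
    (F : G → G → k) (hne : ∀ x y, F x y ≠ 0)
    (hr : ∀ x, F x 1 = 1) (hl : ∀ x, F 1 x = 1)
    (s : G → k) (hs : ∀ x, s x ≠ 0) (hse : s 1 = 1)
    (hs2 : ∀ x, s x ^ 2 = 1)
    (hrel : ∀ x y : G, s x * s y / s (x * y) = F x y / F y x)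
    (α : k) (hα : α ≠ 0) :
    ∀ x y z : G,
      cob (Fbar F s α) (x, 1) (y, 1) (z, 1) = cob F x y z ∧
      cob (Fbar F s α) (x, vv) (y, 1) (z, 1) = (F y z / F z y) * cob F x y z ∧
      cob (Fbar F s α) (x, 1) (y, vv) (z, 1)
        = (F y z / F z y) * (F (x * y) z / F z (x * y)) * cob F x y z ∧
      cob (Fbar F s α) (x, 1) (y, 1) (z, vv) = (F x y / F y x) * cob F x y z ∧
      cob (Fbar F s α) (x, vv) (y, vv) (z, 1)
        = (F (x * y) z / F z (x * y)) * cob F x y z ∧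
      cob (Fbar F s α) (x, vv) (y, 1) (z, vv)
        = (F y z / F z y) * (F x y / F y x) * cob F x y z ∧
      cob (Fbar F s α) (x, 1) (y, vv) (z, vv)
        = (F x (y * z) / F (y * z) x) * cob F x y z ∧
      cob (Fbar F s α) (x, vv) (y, vv) (z, vv)
        = (F (x * y) z / F z (x * y)) * (F x y / F y x) * cob F x y z := by
  intro x y z
  have hvv : vv ≠ (1:Z2) := by decide
  have hvvsq : vv * vv = (1:Z2) := by decide
  have hswap : ∀ a b : G, F b a = s (a*b) * s a * s b * F a b := by
    intro a b
    have h := hrel a b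
    rw [div_eq_div_iff (hs _) (hne _ _)] at h
    linear_combination s a * s b * h - F b a * s b ^ 2 * hs2 a - F b a * hs2 b
  have hs3 : ∀ a : G, s a ^ 3 = s a := by
    intro a; rw [pow_succ, hs2, one_mul]
  have hs4 : ∀ a : G, s a ^ 4 = 1 := by
    intro a; rw [show (4:ℕ) = 2*2 from rfl, pow_mul, hs2, one_pow]
  have key : ∀ (A B C D : k), B ≠ 0 → D ≠ 0 → A * D = C * B → A / B = C / D := by
    intro A B C D hB hD h
    rw [div_eq_div_iff hB hD, h]
  refine ⟨by simp only [cob, Fbar, Prod.mk_mul_mk, mul_one, one_mul, hvvsq, hvv, if_true,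
      if_false, ite_true, ite_false, if_neg hvv, Prod.fst, Prod.snd],
    ?_, ?_, ?_, ?_, ?_, ?_, ?_⟩ <;>
  · simp only [cob, Fbar, Prod.mk_mul_mk, mul_one, one_mul, hvvsq, hvv, if_true, if_false,
      ite_true, ite_false, if_neg hvv, Prod.fst, Prod.snd]
    simp only [div_mul_div_comm]
    refine key _ _ _ _ (by simp [mul_eq_zero, hne, hs, hα]) (by simp [mul_eq_zero, hne, hs, hα]) ?_
    simp only [hswap x y, hswap (x*y) z, hswap x (y*z), hswap y z]
    simp only [mul_assoc]
    try ring_nf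
    try simp only [hs2, hs3, hs4, one_mul, mul_one]
    try ring_nf
end

section
/- With the Cayley–Dickson cochain extension F̄ of (F,s,α) as above, the doubled algebra k_{F̄}Ḡ is associative if and only if k_F G is both associative and commutative. -/
section helpers
variable {H : Type*} [CommGroup H] [Fintype H] {k : Type*} [Field k]

lemma tmul_single_s18 [DecidableEq H] (F : H → H → k) (u v : H) (c d : k) :
    tmul F (fun t => if t = u then c else 0) (fun t => if t = v then d else 0)
      = fun z => if z = u * v then F u v * c * d else 0 := by
  funext z
  simp only [tmul]
  rw [Finset.sum_eq_single u]
  · by_cases h : z = u * v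
    · subst h
      simp [mul_assoc]
    · have : ¬ (u⁻¹ * z = v) := by
        intro hv; apply h; rw [← hv]; group
      simp [this, h]
  · intro b _ hb
    simp [hb]
  · simp

lemma assoc_iff_cocycle (F : H → H → k) :
    (∀ a b c : H → k, tmul F (tmul F a b) c = tmul F a (tmul F b c)) ↔
    (∀ x y z : H, F x y * F (x * y) z = F y z * F x (y * z)) := by
  classical
  constructor
  · intro h x y z
    have h1 := congrFun (h (fun t => if t = x then 1 else 0)
      (fun t => if t = y then 1 else 0) (fun t => if t = z then 1 else 0)) (x * y * z)
    rw [tmul_single_s18, tmul_single_s18] at h1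
    rw [tmul_single_s18, tmul_single_s18] at h1
    simp only [mul_one, if_true, mul_assoc x y z, if_pos rfl] at h1
    linear_combination h1
  · intro hc a b c
    funext z
    simp only [tmul, Finset.sum_mul, Finset.mul_sum]
    rw [Finset.sum_comm]
    refine Finset.sum_congr rfl fun y _ => ?_
    rw [← Equiv.sum_comp (Equiv.mulLeft y) (fun x => _)]
    refine Finset.sum_congr rfl fun x _ => ?_
    simp only [Equiv.coe_mulLeft]
    have h1 : y⁻¹ * (y * x) = x := by group
    have h2 : (y * x)⁻¹ * z = x⁻¹ * (y⁻¹ * z) := by group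
    rw [h1, h2]
    have hcc := hc y x (x⁻¹ * (y⁻¹ * z))
    have h3 : x * (x⁻¹ * (y⁻¹ * z)) = y⁻¹ * z := by group
    rw [h3] at hcc
    linear_combination (a y * b x * c (x⁻¹ * (y⁻¹ * z))) * hcc

lemma comm_iff_symm (F : H → H → k) :
    (∀ a b : H → k, tmul F a b = tmul F b a) ↔ (∀ x y : H, F x y = F y x) := by
  classical
  constructor
  · intro h x y
    have h1 := congrFun (h (fun t => if t = x then 1 else 0)
      (fun t => if t = y then 1 else 0)) (x * y)
    rw [tmul_single_s18, tmul_single_s18] at h1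
    simpa [mul_comm x y] using h1
  · intro hsym a b
    funext z
    simp only [tmul]
    rw [← Equiv.sum_comp ((Equiv.inv H).trans (Equiv.mulRight z)) (fun x => _)]
    refine Finset.sum_congr rfl fun x _ => ?_
    simp only [Equiv.trans_apply, Equiv.inv_apply, Equiv.coe_mulRight]
    have h1 : (x⁻¹ * z)⁻¹ * z = x := by
      rw [mul_inv_rev, inv_inv, mul_assoc, mul_comm x z, ← mul_assoc, inv_mul_cancel, one_mul]
    rw [h1, hsym]
    ring

end helpers

/-- the Cayley–Dickson double `k_{F̄}Ḡ` is associative iff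
`k_F G` is associative and commutative. -/
theorem stmt18 {G : Type*} [CommGroup G] [Fintype G] {k : Type*} [Field k]
    (h2 : (2 : k) ≠ 0)
    (F : G → G → k) (hne : ∀ x y, F x y ≠ 0)
    (hr : ∀ x, F x 1 = 1) (hl : ∀ x, F 1 x = 1)
    (s : G → k) (hs : ∀ x, s x ≠ 0) (hse : s 1 = 1)
    (hs2 : ∀ x, s x ^ 2 = 1)
    (hrel : ∀ x y : G, s x * s y / s (x * y) = F x y / F y x)
    (α : k) (hα : α ≠ 0) :
    (∀ a b c : G × Z2 → k,
      tmul (Fbar F s α) (tmul (Fbar F s α) a b) c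
        = tmul (Fbar F s α) a (tmul (Fbar F s α) b c))
    ↔ ((∀ a b c : G → k, tmul F (tmul F a b) c = tmul F a (tmul F b c)) ∧
       (∀ a b : G → k, tmul F a b = tmul F b a)) := by
  classical
  rw [assoc_iff_cocycle, assoc_iff_cocycle, comm_iff_symm]
  have hg1 : (Multiplicative.ofAdd (1 : ZMod 2) : Z2) ≠ 1 := by decide
  have hgg : (Multiplicative.ofAdd (1 : ZMod 2) : Z2) *
      Multiplicative.ofAdd (1 : ZMod 2) = 1 := by decide
  have hcases : ∀ ε : Z2, ε = 1 ∨ ε = Multiplicative.ofAdd (1 : ZMod 2) := by decide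
  constructor
  · intro h
    have hco : ∀ x y z : G, F x y * F (x * y) z = F y z * F x (y * z) := by
      intro x y z
      have h1 := h (x, 1) (y, 1) (z, 1)
      simpa [Fbar, Prod.mk_mul_mk] using h1
    have hmul : ∀ x y : G, s (x * y) = s x * s y := by
      intro x y
      have h1 := h (x, 1) (y, 1) (1, Multiplicative.ofAdd (1 : ZMod 2))
      simp [Fbar, Prod.mk_mul_mk, hg1, hr, hl] at h1
      have h1' : F x y * s (x * y) = F x y * (s x * s y) := by linear_combination h1
      exact mul_left_cancel₀ (hne x y) h1'
    refine ⟨hco, fun x y => ?_⟩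
    have h2 := hrel x y
    rw [hmul x y, div_self (mul_ne_zero (hs x) (hs y))] at h2
    exact (div_eq_one_iff_eq (hne y x)).mp h2.symm
  · rintro ⟨hco, hsym⟩
    have hmul : ∀ x y : G, s (x * y) = s x * s y := by
      intro x y
      have h2 := hrel x y
      rw [hsym x y, div_self (hne y x)] at h2
      exact ((div_eq_one_iff_eq (hs (x * y))).mp h2).symm
    rintro ⟨x, ε₁⟩ ⟨y, ε₂⟩ ⟨z, ε₃⟩
    rcases hcases ε₁ with rfl | rfl
    · rcases hcases ε₂ with rfl | rfl
      · rcases hcases ε₃ with rfl | rfl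
        · -- (1,1,1)
          simpa [Fbar, Prod.mk_mul_mk] using hco x y z
        · -- (1,1,g)
          simp [Fbar, Prod.mk_mul_mk, hg1]
          rw [hmul x y]
          linear_combination (s x * s y) * hco x y z
      · rcases hcases ε₃ with rfl | rfl
        · -- (1,g,1)
          simp [Fbar, Prod.mk_mul_mk, hg1]
          rw [hsym z (x * y), hsym z y]
          linear_combination s x * hco x y z
        · -- (1,g,g)
          simp [Fbar, Prod.mk_mul_mk, hg1, hgg]
          rw [hmul x y, hsym z (x * y), hsym z y]
          linear_combination α * s y * s x ^ 2 * hco x y z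
            + α * s y * (F y z * F x (y * z)) * hs2 x
    · rcases hcases ε₂ with rfl | rfl
      · rcases hcases ε₃ with rfl | rfl
        · -- (g,1,1)
          simp [Fbar, Prod.mk_mul_mk, hg1]
          rw [hsym y x, hsym z (x * y), hsym (y * z) x]
          linear_combination hco x y z
        · -- (g,1,g)
          simp [Fbar, Prod.mk_mul_mk, hg1, hgg]
          rw [hmul x y, hsym y x, hsym z (x * y), hsym (y * z) x]
          linear_combination α * s x * s y * hco x y z
      · rcases hcases ε₃ with rfl | rfl
        · -- (g,g,1)
          simp [Fbar, Prod.mk_mul_mk, hg1, hgg]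
          rw [hsym y x, hsym z y, hsym (y * z) x]
          linear_combination α * s x * hco x y z
        · -- (g,g,g)
          simp [Fbar, Prod.mk_mul_mk, hg1, hgg]
          rw [hmul x y, hsym y x, hsym z y, hsym (y * z) x]
          linear_combination α * s y * s x ^ 2 * hco x y z
            + α * s y * (F y z * F x (y * z)) * hs2 x
end

section
/- Quasi-matrix algebra: let G be a group, φ a 3-cocycle on G with values in k*, and |·|: {1,…,n} → G a grading function. Define on M_n(k) the product (α·β)^i_j = Σ_k α^i_k β^k_j · φ(|i|,|k|⁻¹,|k||j|⁻¹)/φ(|k|⁻¹,|k|,|j|⁻¹). Then this product satisfies (α·β)·γ restricted to homogeneous basis elements E_i^j (of degree |i||j|⁻¹) obeys (E_i^j · E_k^l) · E_m^n = φ(|i||j|⁻¹, |k||l|⁻¹, |m||n|⁻¹) E_i^j · (E_k^l · E_m^n), i.e. M_{n,φ} is a G-graded quasialgebra. -/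
/-!
Matrix units multiply as `E_i^j · E_j^q = c(|i|, |j|, |q|) E_i^q` (and `E_i^j · E_p^q = 0` for
`j ≠ p`), where `c(x, y, w) = φ(x, y⁻¹, y w⁻¹) / φ(y⁻¹, y, w⁻¹)`. Both sides of the
quasi-associativity law are therefore multiples of the same matrix unit, and the claim reduces to
the scalar identity `c(x,y,z) c(x,z,w) = φ(xy⁻¹, yz⁻¹, zw⁻¹) c(y,z,w) c(x,y,w)`. This is the
quotient of the cocycle identities at `(x, y⁻¹, yz⁻¹, zw⁻¹)` and `(y⁻¹, y, z⁻¹, zw⁻¹)`, using that a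
normalized cocycle also satisfies `φ(1, y, z) = 1`.
-/

/-- The quasi-matrix product on `M_n(k)` twisted by a 3-cocycle `φ` on `G`,
relative to a grading function `d : Fin N → G`. -/
def qmul {G : Type*} [Group G] {k : Type*} [Field k] {N : ℕ}
    (φ : G → G → G → k) (d : Fin N → G)
    (A B : Matrix (Fin N) (Fin N) k) : Matrix (Fin N) (Fin N) k :=
  Matrix.of fun i j => ∑ m : Fin N,
    A i m * B m j * (φ (d i) (d m)⁻¹ (d m * (d j)⁻¹) / φ (d m)⁻¹ (d m) (d j)⁻¹)

def qmulCoeff {G : Type*} [Group G] {k : Type*} [Field k] (φ : G → G → G → k) (x y w : G) : k :=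
  φ x y⁻¹ (y * w⁻¹) / φ y⁻¹ y w⁻¹

section Cocycle

variable {G : Type*} [Group G] {k : Type*} [Field k] {φ : G → G → G → k}

theorem cocycle_one_left (hne : ∀ x y z, φ x y z ≠ 0)
    (hcoc : ∀ x y z w : G,
      φ y z w * φ x (y * z) w * φ x y z = φ x y (z * w) * φ (x * y) z w)
    (hnorm : ∀ x y : G, φ x 1 y = 1) (y z : G) : φ 1 y z = 1 := by
  have h := hcoc 1 1 y z
  simp only [hnorm, one_mul, mul_one] at h
  exact mul_left_cancel₀ (hne 1 y z) (h.trans (mul_one _).symm)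

theorem qmulCoeff_mul_qmulCoeff (hne : ∀ x y z, φ x y z ≠ 0)
    (hcoc : ∀ x y z w : G,
      φ y z w * φ x (y * z) w * φ x y z = φ x y (z * w) * φ (x * y) z w)
    (hnorm : ∀ x y : G, φ x 1 y = 1) (x y z w : G) :
    qmulCoeff φ x y z * qmulCoeff φ x z w
      = φ (x * y⁻¹) (y * z⁻¹) (z * w⁻¹) * qmulCoeff φ y z w * qmulCoeff φ x y w := by
  have hA := hcoc x y⁻¹ (y * z⁻¹) (z * w⁻¹)
  have hB := hcoc y⁻¹ y z⁻¹ (z * w⁻¹)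
  simp only [mul_assoc, inv_mul_cancel_left, inv_mul_cancel] at hA hB
  rw [cocycle_one_left hne hcoc hnorm, mul_one] at hB
  have := hne y⁻¹ y z⁻¹
  have := hne z⁻¹ z w⁻¹
  have := hne y⁻¹ y w⁻¹
  unfold qmulCoeff
  field_simp
  linear_combination φ y z⁻¹ (z * w⁻¹) * φ y⁻¹ y z⁻¹ * hA
    - φ x y⁻¹ (y * z⁻¹) * φ x z⁻¹ (z * w⁻¹) * hB

end Cocycle

section MatrixUnits

variable {G : Type*} [Group G] {k : Type*} [Field k] {N : ℕ} (φ : G → G → G → k) (d : Fin N → G)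

theorem qmul_single_single (i j p q : Fin N) (a b : k) :
    qmul φ d (Matrix.single i j a) (Matrix.single p q b)
      = if j = p then Matrix.single i q (a * b * qmulCoeff φ (d i) (d j) (d q)) else 0 := by
  ext u v
  simp only [qmul, qmulCoeff, Matrix.of_apply, Matrix.single, ite_and, ite_mul, mul_ite,
    zero_mul, mul_zero]
  rw [Finset.sum_eq_single j]
  · split_ifs <;> simp_all
  · intro m _ hm
    split_ifs <;> simp_all
  · simp

theorem qmul_zero_left (A : Matrix (Fin N) (Fin N) k) : qmul φ d 0 A = 0 := by
  ext; simp [qmul]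

theorem qmul_zero_right (A : Matrix (Fin N) (Fin N) k) : qmul φ d A 0 = 0 := by
  ext; simp [qmul]

end MatrixUnits

/-- on matrix units, the twisted matrix product is quasi-associative with
associator `φ(|i||j|⁻¹, |p||q|⁻¹, |r||s|⁻¹)`, i.e. `M_{n,φ}` is a `G`-graded quasialgebra. -/
theorem stmt19 {G : Type*} [Group G] {k : Type*} [Field k] {N : ℕ}
    (φ : G → G → G → k) (hne : ∀ x y z, φ x y z ≠ 0)
    (hcoc : ∀ x y z w : G,
      φ y z w * φ x (y * z) w * φ x y z = φ x y (z * w) * φ (x * y) z w)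
    (hnorm : ∀ x y : G, φ x 1 y = 1)
    (d : Fin N → G) :
    ∀ i j p q r s : Fin N,
      qmul φ d (qmul φ d (Matrix.single i j (1 : k))
          (Matrix.single p q 1)) (Matrix.single r s 1)
        = φ (d i * (d j)⁻¹) (d p * (d q)⁻¹) (d r * (d s)⁻¹) •
          qmul φ d (Matrix.single i j 1)
            (qmul φ d (Matrix.single p q 1) (Matrix.single r s 1)) := by
  intro i j p q r s
  by_cases hjp : j = p
  · subst hjp
    by_cases hqr : q = r
    · subst hqr
      simp only [qmul_single_single, if_pos, Matrix.smul_single, smul_eq_mul, one_mul, mul_one]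
      rw [qmulCoeff_mul_qmulCoeff hne hcoc hnorm, mul_assoc]
    · simp only [qmul_single_single, if_pos, if_neg hqr, qmul_zero_right, smul_zero]
  · simp only [qmul_single_single, if_neg hjp, qmul_zero_left]
    split_ifs <;> simp [qmul_single_single, hjp, qmul_zero_right]
end
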